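/- arXiv:1308.6559 — 7 statements merged into one kernel-verified Lean document; each statement's English description precedes it below -/
import Mathlib

section
/- Let (φ1, φ2) be an admissible nondecreasing pair and let 0 < m1 ≤ m2 be reals. Then for every t ∈ [0,1], the pair of functions x ↦ F_{φ1,m1}(x,t) and x ↦ F_{φ2,m2}(x,t) is again an admissible nondecreasing pair; that is, both are twice differentiable in x with bounded first and second derivatives, nondecreasing, convex, F_{φ1,m1}(x,t) ≤ F_{φ2,m2}(x,t) for all x, and ∂ₓF_{φ1,m1}(x,t) ≤ ∂ₓF_{φ2,m2}(x,t) for all x. -/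
open MeasureTheory ProbabilityTheory Set

/-- `parisiF φ m x t = (1/m) log E[exp (m φ(x + √t Z))]` with `Z` standard Gaussian. -/
noncomputable def parisiF (φ : ℝ → ℝ) (m : ℝ) (x t : ℝ) : ℝ :=
  (1 / m) * Real.log (∫ z, Real.exp (m * φ (x + Real.sqrt t * z)) ∂(gaussianReal 0 1))

/-- `φ` is twice differentiable with bounded first and second derivatives. -/
def TwiceDiffBounded (φ : ℝ → ℝ) : Prop :=
  Differentiable ℝ φ ∧ Differentiable ℝ (deriv φ) ∧
    (∃ C, ∀ x, |deriv φ x| ≤ C) ∧ (∃ C, ∀ x, |deriv (deriv φ) x| ≤ C)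

/-- An admissible nondecreasing pair. -/
def AdmissibleNondecPair (φ1 φ2 : ℝ → ℝ) : Prop :=
  TwiceDiffBounded φ1 ∧ TwiceDiffBounded φ2 ∧
    Monotone φ1 ∧ Monotone φ2 ∧
    ConvexOn ℝ Set.univ φ1 ∧ ConvexOn ℝ Set.univ φ2 ∧
    (∀ x, φ1 x ≤ φ2 x) ∧ (∀ x, deriv φ1 x ≤ deriv φ2 x)

/-!
Write `Z(x) = E exp (m φ(x + √t Z))` and `⟨·⟩` for the average under the Gibbs density
`exp (m φ(x + √t Z)) / Z(x)`. Differentiating under the Gaussian integral gives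
`F' = ⟨φ'⟩` and `F'' = ⟨φ''⟩ + m (⟨φ'²⟩ - ⟨φ'⟩²)`, so `F` inherits the bounds on `φ'` and `φ''`,
monotonicity, and convexity (a variance is nonnegative). `F₁ ≤ F₂` follows from `φ₁ ≤ φ₂` and
Lyapunov's inequality `‖e^g‖_{m₁} ≤ ‖e^g‖_{m₂}`. For the derivatives,
`⟨φ₁'⟩₁ ≤ ⟨φ₂'⟩₁ ≤ ⟨φ₂'⟩₂`, the last step by Chebyshev's correlation inequality: `φ₂'` is
nondecreasing and so is the likelihood ratio `exp (m₂ φ₂ - m₁ φ₁)` of the two Gibbs measures.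
-/

open Real

section WeightedAverage

variable {α : Type*} [MeasurableSpace α] {μ : Measure α} {w w₁ w₂ f g : α → ℝ} {K : ℝ}

noncomputable def weightedAvg (μ : Measure α) (w f : α → ℝ) : ℝ :=
  (∫ a, f a * w a ∂μ) / ∫ a, w a ∂μ

lemma weightedAvg_const_mul (c : ℝ) :
    weightedAvg μ w (fun a => c * f a) = c * weightedAvg μ w f := by
  simp only [weightedAvg, mul_assoc, integral_const_mul, mul_div_assoc]

lemma weightedAvg_nonneg (hw : ∀ a, 0 ≤ w a) (hf : ∀ a, 0 ≤ f a) : 0 ≤ weightedAvg μ w f :=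
  div_nonneg (integral_nonneg fun a => mul_nonneg (hf a) (hw a)) (integral_nonneg hw)

lemma weightedAvg_mono (hw : ∀ a, 0 ≤ w a) (hfw : Integrable (fun a => f a * w a) μ)
    (hgw : Integrable (fun a => g a * w a) μ) (hfg : ∀ a, f a ≤ g a) :
    weightedAvg μ w f ≤ weightedAvg μ w g :=
  div_le_div_of_nonneg_right
    (integral_mono hfw hgw fun a => mul_le_mul_of_nonneg_right (hfg a) (hw a))
    (integral_nonneg hw)

lemma abs_weightedAvg_le (hw : ∀ a, 0 ≤ w a) (hwi : Integrable w μ) (hpos : 0 < ∫ a, w a ∂μ)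
    (hf : ∀ a, |f a| ≤ K) : |weightedAvg μ w f| ≤ K := by
  have hnorm : ‖∫ a, f a * w a ∂μ‖ ≤ ∫ a, K * w a ∂μ :=
    norm_integral_le_of_norm_le (hwi.const_mul K) (ae_of_all _ fun a => by
      rw [norm_mul, Real.norm_eq_abs, Real.norm_of_nonneg (hw a)]
      exact mul_le_mul_of_nonneg_right (hf a) (hw a))
  rw [Real.norm_eq_abs] at hnorm
  rw [weightedAvg, abs_div, abs_of_pos hpos, div_le_iff₀ hpos, ← integral_const_mul]
  exact hnorm

lemma sq_weightedAvg_le (hw : ∀ a, 0 ≤ w a) (hwi : Integrable w μ) (hpos : 0 < ∫ a, w a ∂μ)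
    (hfw : Integrable (fun a => f a * w a) μ) (hf2w : Integrable (fun a => f a ^ 2 * w a) μ) :
    weightedAvg μ w f ^ 2 ≤ weightedAvg μ w (fun a => f a ^ 2) := by
  set A := weightedAvg μ w f
  have hA : ∫ a, f a * w a ∂μ = A * ∫ a, w a ∂μ := by
    simp only [A, weightedAvg]; field_simp
  have hvar : 0 ≤ ∫ a, (f a - A) ^ 2 * w a ∂μ :=
    integral_nonneg fun a => mul_nonneg (sq_nonneg _) (hw a)
  have hexpand : ∫ a, (f a - A) ^ 2 * w a ∂μ
      = ∫ a, f a ^ 2 * w a ∂μ - 2 * A * ∫ a, f a * w a ∂μ + A ^ 2 * ∫ a, w a ∂μ := by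
    have hi : Integrable (fun a => f a ^ 2 * w a - 2 * A * (f a * w a)) μ :=
      hf2w.sub (hfw.const_mul _)
    rw [← integral_const_mul, ← integral_const_mul, ← integral_sub hf2w (hfw.const_mul _),
      ← integral_add hi (hwi.const_mul _)]
    exact integral_congr_ae (ae_of_all _ fun a => by ring)
  rw [hA] at hexpand
  rw [weightedAvg, le_div_iff₀ hpos]
  linarith

/-- Chebyshev's correlation inequality for a nondecreasing likelihood ratio `w₂ / w₁`. -/
lemma weightedAvg_le_weightedAvg_of_monotone [LinearOrder α] [SigmaFinite μ]
    (hw₁i : Integrable w₁ μ) (hw₂i : Integrable w₂ μ)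
    (hfw₁ : Integrable (fun a => f a * w₁ a) μ) (hfw₂ : Integrable (fun a => f a * w₂ a) μ)
    (hpos₁ : 0 < ∫ a, w₁ a ∂μ) (hpos₂ : 0 < ∫ a, w₂ a ∂μ)
    (hf : Monotone f) (hratio : ∀ a b, a ≤ b → w₂ a * w₁ b ≤ w₂ b * w₁ a) :
    weightedAvg μ w₁ f ≤ weightedAvg μ w₂ f := by
  let H : α × α → ℝ := fun p => (f p.1 - f p.2) * (w₂ p.1 * w₁ p.2 - w₁ p.1 * w₂ p.2)
  have hH : ∀ p, 0 ≤ H p := by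
    rintro ⟨a, b⟩
    rcases le_total b a with hba | hab
    · exact mul_nonneg (sub_nonneg.2 (hf hba)) (by linarith [hratio b a hba])
    · exact mul_nonneg_of_nonpos_of_nonpos (sub_nonpos.2 (hf hab)) (by linarith [hratio a b hab])
  have hsplit : ∀ p : α × α, H p = ((f p.1 * w₂ p.1) * w₁ p.2 + w₁ p.1 * (f p.2 * w₂ p.2))
      - ((f p.1 * w₁ p.1) * w₂ p.2 + w₂ p.1 * (f p.2 * w₁ p.2)) := fun p => by ring
  have h0 : 0 ≤ ∫ p, H p ∂(μ.prod μ) := integral_nonneg hH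
  have hi₂₁ : Integrable (fun p : α × α => f p.1 * w₂ p.1 * w₁ p.2 + w₁ p.1 * (f p.2 * w₂ p.2))
      (μ.prod μ) := (hfw₂.mul_prod hw₁i).add (hw₁i.mul_prod hfw₂)
  have hi₁₂ : Integrable (fun p : α × α => f p.1 * w₁ p.1 * w₂ p.2 + w₂ p.1 * (f p.2 * w₁ p.2))
      (μ.prod μ) := (hfw₁.mul_prod hw₂i).add (hw₂i.mul_prod hfw₁)
  rw [integral_congr_ae (ae_of_all _ hsplit), integral_sub hi₂₁ hi₁₂,
    integral_add (hfw₂.mul_prod hw₁i) (hw₁i.mul_prod hfw₂),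
    integral_add (hfw₁.mul_prod hw₂i) (hw₂i.mul_prod hfw₁),
    integral_prod_mul (fun a => f a * w₂ a) w₁, integral_prod_mul w₁ (fun a => f a * w₂ a),
    integral_prod_mul (fun a => f a * w₁ a) w₂, integral_prod_mul w₂ (fun a => f a * w₁ a)] at h0
  rw [weightedAvg, weightedAvg, div_le_div_iff₀ hpos₁ hpos₂]
  linarith

end WeightedAverage

/-- Lyapunov's inequality `‖e^g‖_{m₁} ≤ ‖e^g‖_{m₂}`: Jensen for the concave `y ↦ y ^ (m₁ / m₂)`. -/
lemma inv_mul_log_integral_exp_mul_le {α : Type*} [MeasurableSpace α] {μ : Measure α}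
    [IsProbabilityMeasure μ] {g : α → ℝ} {m₁ m₂ : ℝ} (hm₁ : 0 < m₁) (hm₁₂ : m₁ ≤ m₂)
    (hi₁ : Integrable (fun a => exp (m₁ * g a)) μ) (hi₂ : Integrable (fun a => exp (m₂ * g a)) μ) :
    (1 / m₁) * log (∫ a, exp (m₁ * g a) ∂μ) ≤ (1 / m₂) * log (∫ a, exp (m₂ * g a) ∂μ) := by
  have hm₂ : 0 < m₂ := hm₁.trans_le hm₁₂
  have hpow : (fun a => exp (m₂ * g a) ^ (m₁ / m₂)) = fun a => exp (m₁ * g a) := by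
    ext a
    rw [← exp_mul]
    congr 1
    field_simp
  have hjensen : ∫ a, exp (m₁ * g a) ∂μ ≤ (∫ a, exp (m₂ * g a) ∂μ) ^ (m₁ / m₂) := by
    have hr : 0 ≤ m₁ / m₂ := (div_pos hm₁ hm₂).le
    have := (concaveOn_rpow hr ((div_le_one hm₂).2 hm₁₂)).le_map_integral (μ := μ)
      (fun y _ => (continuousAt_rpow_const y (m₁ / m₂) (Or.inr hr)).continuousWithinAt)
      isClosed_Ici (ae_of_all _ fun a => (exp_pos (m₂ * g a)).le) hi₂
      (by simpa only [Function.comp_def, hpow] using hi₁)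
    simpa only [Function.comp_def, hpow] using this
  have hlog : log (∫ a, exp (m₁ * g a) ∂μ) ≤ m₁ / m₂ * log (∫ a, exp (m₂ * g a) ∂μ) := by
    rw [← log_rpow (integral_exp_pos hi₂)]
    exact log_le_log (integral_exp_pos hi₁) hjensen
  calc (1 / m₁) * log (∫ a, exp (m₁ * g a) ∂μ)
      ≤ (1 / m₁) * (m₁ / m₂ * log (∫ a, exp (m₂ * g a) ∂μ)) :=
        mul_le_mul_of_nonneg_left hlog (by positivity)
    _ = (1 / m₂) * log (∫ a, exp (m₂ * g a) ∂μ) := by field_simp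

lemma integrable_exp_mul_abs_gaussianReal {μ : ℝ} {v : NNReal} (c : ℝ) :
    Integrable (fun z => exp (c * |z|)) (gaussianReal μ v) := by
  refine (integrable_exp_abs_mul_abs (X := id) (integrable_exp_mul_gaussianReal c)
    (integrable_exp_mul_gaussianReal (-c))).mono' (by fun_prop) (ae_of_all _ fun z => ?_)
  rw [Real.norm_of_nonneg (exp_pos _).le]
  exact exp_le_exp.2 (mul_le_mul_of_nonneg_right (le_abs_self c) (abs_nonneg z))

lemma monotone_deriv_of_convexOn {φ : ℝ → ℝ} (hφ : Differentiable ℝ φ)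
    (hconv : ConvexOn ℝ univ φ) : Monotone (deriv φ) :=
  monotoneOn_univ.1 (hconv.monotoneOn_deriv fun y _ => hφ y)

lemma exp_mul_le_of_abs_deriv_le {φ : ℝ → ℝ} {C m : ℝ} (hφ : Differentiable ℝ φ)
    (hC : ∀ y, |deriv φ y| ≤ C) (hm : 0 ≤ m) (y : ℝ) :
    exp (m * φ y) ≤ exp (m * φ 0 + m * C * |y|) := by
  have hlip := convex_univ.norm_image_sub_le_of_norm_deriv_le (fun x _ => hφ x)
    (fun x _ => (Real.norm_eq_abs _).trans_le (hC x)) (mem_univ 0) (mem_univ y)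
  simp only [Real.norm_eq_abs, sub_zero] at hlip
  refine exp_le_exp.2 ?_
  nlinarith [le_abs_self (φ y - φ 0)]

local notation "γ" => gaussianReal 0 1

/-- `parisiF φ m x t` is definitionally `m⁻¹ log ∫ gibbsWeight φ m √t x dγ`. -/
noncomputable def gibbsWeight (φ : ℝ → ℝ) (m s x z : ℝ) : ℝ :=
  exp (m * φ (x + s * z))

/-- `⟨f⟩`: the average of `f (x + s Z)` under the Gibbs density `gibbsWeight φ m s x`. -/
noncomputable def gibbsAvg (φ : ℝ → ℝ) (m s x : ℝ) (f : ℝ → ℝ) : ℝ :=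
  weightedAvg γ (gibbsWeight φ m s x) fun z => f (x + s * z)

section GibbsWeight

variable {φ f : ℝ → ℝ} {m s C K K' : ℝ}

lemma gibbsWeight_pos (x z : ℝ) : 0 < gibbsWeight φ m s x z := exp_pos _

lemma continuous_gibbsWeight (hφ : Continuous φ) (x : ℝ) : Continuous (gibbsWeight φ m s x) := by
  unfold gibbsWeight; fun_prop

lemma gibbsWeight_le (hφ : Differentiable ℝ φ) (hC : ∀ y, |deriv φ y| ≤ C) (hm : 0 ≤ m)
    {x R : ℝ} (hx : |x| ≤ R) (z : ℝ) :
    gibbsWeight φ m s x z ≤ exp (m * φ 0 + m * C * R) * exp (m * C * |s| * |z|) := by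
  have hC0 : 0 ≤ m * C := mul_nonneg hm ((abs_nonneg _).trans (hC 0))
  have hxz : |x + s * z| ≤ R + |s| * |z| :=
    (abs_add_le _ _).trans (by rw [abs_mul]; linarith)
  rw [← exp_add]
  refine (exp_mul_le_of_abs_deriv_le hφ hC hm _).trans (exp_le_exp.2 ?_)
  nlinarith [mul_le_mul_of_nonneg_left hxz hC0]

lemma integrable_gibbsWeight (hφ : Differentiable ℝ φ) (hC : ∀ y, |deriv φ y| ≤ C) (hm : 0 ≤ m)
    (x : ℝ) : Integrable (gibbsWeight φ m s x) γ := by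
  refine ((integrable_exp_mul_abs_gaussianReal (m * C * |s|)).const_mul
    (exp (m * φ 0 + m * C * |x|))).mono'
    (continuous_gibbsWeight hφ.continuous x).aestronglyMeasurable (ae_of_all _ fun z => ?_)
  rw [Real.norm_of_nonneg (gibbsWeight_pos x z).le]
  exact gibbsWeight_le hφ hC hm le_rfl z

lemma integral_gibbsWeight_pos (hφ : Differentiable ℝ φ) (hC : ∀ y, |deriv φ y| ≤ C)
    (hm : 0 ≤ m) (x : ℝ) : 0 < ∫ z, gibbsWeight φ m s x z ∂γ :=
  integral_exp_pos (integrable_gibbsWeight hφ hC hm x)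

lemma integrable_mul_gibbsWeight (hφ : Differentiable ℝ φ) (hC : ∀ y, |deriv φ y| ≤ C)
    (hm : 0 ≤ m) (hf : Measurable f) (hK : ∀ y, |f y| ≤ K) (x : ℝ) :
    Integrable (fun z => f (x + s * z) * gibbsWeight φ m s x z) γ :=
  (integrable_gibbsWeight hφ hC hm x).bdd_mul (hf.comp (by fun_prop)).aestronglyMeasurable
    (ae_of_all _ fun z => (Real.norm_eq_abs _).trans_le (hK _))

lemma hasDerivAt_mul_gibbsWeight (hφ : Differentiable ℝ φ) (hf : Differentiable ℝ f) (z x : ℝ) :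
    HasDerivAt (fun x => f (x + s * z) * gibbsWeight φ m s x z)
      ((deriv f (x + s * z) + m * f (x + s * z) * deriv φ (x + s * z))
        * gibbsWeight φ m s x z) x := by
  have hshift : HasDerivAt (fun x : ℝ => x + s * z) 1 x := (hasDerivAt_id x).add_const _
  have hw := (((hφ _).hasDerivAt.comp x hshift).const_mul m).exp
  exact (((hf _).hasDerivAt.comp x hshift).mul hw).congr_deriv (by
    simp only [gibbsWeight, Function.comp_apply]; ring)

lemma hasDerivAt_integral_mul_gibbsWeight (hφ : Differentiable ℝ φ)
    (hC : ∀ y, |deriv φ y| ≤ C) (hm : 0 ≤ m) (hf : Differentiable ℝ f) (hK : ∀ y, |f y| ≤ K)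
    (hK' : ∀ y, |deriv f y| ≤ K') (x₀ : ℝ) :
    HasDerivAt (fun x => ∫ z, f (x + s * z) * gibbsWeight φ m s x z ∂γ)
      (∫ z, (deriv f (x₀ + s * z) + m * f (x₀ + s * z) * deriv φ (x₀ + s * z))
        * gibbsWeight φ m s x₀ z ∂γ) x₀ := by
  have hbound : ∀ z, ∀ x ∈ Metric.ball x₀ 1,
      ‖(deriv f (x + s * z) + m * f (x + s * z) * deriv φ (x + s * z)) * gibbsWeight φ m s x z‖
        ≤ (K' + m * K * C) * (exp (m * φ 0 + m * C * (|x₀| + 1)) * exp (m * C * |s| * |z|)) := by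
    intro z x hx
    have hx' : |x| ≤ |x₀| + 1 := by
      have := abs_sub_abs_le_abs_sub x x₀
      rw [Metric.mem_ball, Real.dist_eq] at hx
      linarith
    have hfac :
        |deriv f (x + s * z) + m * f (x + s * z) * deriv φ (x + s * z)| ≤ K' + m * K * C := by
      refine (abs_add_le _ _).trans (add_le_add (hK' _) ?_)
      rw [abs_mul, abs_mul, abs_of_nonneg hm, mul_assoc, mul_assoc]
      exact mul_le_mul_of_nonneg_left (mul_le_mul (hK _) (hC _) (abs_nonneg _)
        ((abs_nonneg _).trans (hK 0))) hm
    rw [norm_mul, Real.norm_eq_abs, Real.norm_of_nonneg (gibbsWeight_pos x z).le]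
    exact mul_le_mul hfac (gibbsWeight_le hφ hC hm hx' z) (exp_pos _).le
      ((abs_nonneg _).trans hfac)
  have hfm := hf.continuous.measurable
  refine (hasDerivAt_integral_of_dominated_loc_of_deriv_le (Metric.ball_mem_nhds x₀ one_pos)
    (Filter.Eventually.of_forall fun x =>
      (integrable_mul_gibbsWeight hφ hC hm hfm hK x).aestronglyMeasurable)
    (integrable_mul_gibbsWeight hφ hC hm hfm hK x₀) ?_ (ae_of_all _ hbound)
    (((integrable_exp_mul_abs_gaussianReal _).const_mul _).const_mul _)
    (ae_of_all _ fun z x _ => hasDerivAt_mul_gibbsWeight hφ hf z x)).2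
  have := measurable_deriv f
  have := measurable_deriv φ
  exact (Measurable.aestronglyMeasurable (by fun_prop)).mul
    (continuous_gibbsWeight hφ.continuous x₀).aestronglyMeasurable

end GibbsWeight

section ParisiDerivatives

variable {φ : ℝ → ℝ} {m s C D t : ℝ}

lemma hasDerivAt_integral_gibbsWeight (hφ : Differentiable ℝ φ) (hC : ∀ y, |deriv φ y| ≤ C)
    (hm : 0 ≤ m) (x₀ : ℝ) :
    HasDerivAt (fun x => ∫ z, gibbsWeight φ m s x z ∂γ)
      (m * ∫ z, deriv φ (x₀ + s * z) * gibbsWeight φ m s x₀ z ∂γ) x₀ := by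
  have h := hasDerivAt_integral_mul_gibbsWeight (f := fun _ => (1 : ℝ)) (K := 1) (K' := 0)
    hφ hC hm (differentiable_const 1) (by simp) (by simp) x₀ (s := s)
  simp only [one_mul, deriv_const', zero_add, mul_one] at h
  rw [← integral_const_mul]
  simpa only [mul_assoc] using h

lemma hasDerivAt_parisiF (hφ : Differentiable ℝ φ) (hC : ∀ y, |deriv φ y| ≤ C) (hm : 0 < m)
    (x : ℝ) : HasDerivAt (fun x => parisiF φ m x t) (gibbsAvg φ m (√t) x (deriv φ)) x := by
  have hZ := integral_gibbsWeight_pos hφ hC hm.le x (s := √t)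
  exact (((hasDerivAt_integral_gibbsWeight hφ hC hm.le x).log hZ.ne').const_mul (1 / m)).congr_deriv
    (by unfold gibbsAvg weightedAvg; field_simp)

lemma deriv_parisiF (hφ : Differentiable ℝ φ) (hC : ∀ y, |deriv φ y| ≤ C) (hm : 0 < m) :
    deriv (fun x => parisiF φ m x t) = fun x => gibbsAvg φ m (√t) x (deriv φ) :=
  funext fun x => (hasDerivAt_parisiF hφ hC hm x).deriv

/-- Quotient rule, with `Z' = m Z ⟨φ'⟩` for the partition function `Z`. -/
lemma hasDerivAt_gibbsAvg_deriv (hφ : Differentiable ℝ φ) (hφ' : Differentiable ℝ (deriv φ))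
    (hC : ∀ y, |deriv φ y| ≤ C) (hD : ∀ y, |deriv (deriv φ) y| ≤ D) (hm : 0 ≤ m) (x : ℝ) :
    HasDerivAt (fun x => gibbsAvg φ m s x (deriv φ))
      (gibbsAvg φ m s x (fun y => deriv (deriv φ) y + m * deriv φ y ^ 2)
        - m * gibbsAvg φ m s x (deriv φ) ^ 2) x := by
  have hZ := integral_gibbsWeight_pos hφ hC hm x (s := s)
  exact ((hasDerivAt_integral_mul_gibbsWeight hφ hC hm hφ' hC hD x).div
    (hasDerivAt_integral_gibbsWeight hφ hC hm x) hZ.ne').congr_deriv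
    (by unfold gibbsAvg weightedAvg; field_simp)

lemma abs_deriv_deriv_add_mul_sq_le (hC : ∀ y, |deriv φ y| ≤ C)
    (hD : ∀ y, |deriv (deriv φ) y| ≤ D) (hm : 0 ≤ m) (y : ℝ) :
    |deriv (deriv φ) y + m * deriv φ y ^ 2| ≤ D + m * C ^ 2 := by
  refine (abs_add_le _ _).trans (add_le_add (hD y) ?_)
  rw [abs_mul, abs_of_nonneg hm, abs_pow]
  exact mul_le_mul_of_nonneg_left (pow_le_pow_left₀ (abs_nonneg _) (hC y) 2) hm

/-- `⟨φ'²⟩ - ⟨φ'⟩²` is a variance, and `φ'' ≥ 0`. -/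
lemma mul_sq_gibbsAvg_deriv_le (hφ : Differentiable ℝ φ) (hC : ∀ y, |deriv φ y| ≤ C)
    (hD : ∀ y, |deriv (deriv φ) y| ≤ D) (hφ'' : ∀ y, 0 ≤ deriv (deriv φ) y) (hm : 0 ≤ m)
    (x : ℝ) :
    m * gibbsAvg φ m s x (deriv φ) ^ 2
      ≤ gibbsAvg φ m s x (fun y => deriv (deriv φ) y + m * deriv φ y ^ 2) := by
  have hw := integrable_gibbsWeight hφ hC hm x (s := s)
  have hw₀ : ∀ z, 0 ≤ gibbsWeight φ m s x z := fun z => (gibbsWeight_pos x z).le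
  have hmeas := measurable_deriv φ
  have hmeas' := measurable_deriv (deriv φ)
  have hsq : ∀ y, |deriv φ y ^ 2| ≤ C ^ 2 := fun y => by
    rw [abs_pow]; exact pow_le_pow_left₀ (abs_nonneg _) (hC y) 2
  have hφ'2i := integrable_mul_gibbsWeight hφ hC hm (f := fun y => deriv φ y ^ 2) (by fun_prop)
    hsq x (s := s)
  calc m * gibbsAvg φ m s x (deriv φ) ^ 2
      ≤ m * gibbsAvg φ m s x (fun y => deriv φ y ^ 2) :=
        mul_le_mul_of_nonneg_left (sq_weightedAvg_le hw₀ hw (integral_gibbsWeight_pos hφ hC hm x)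
          (integrable_mul_gibbsWeight hφ hC hm hmeas hC x) hφ'2i) hm
    _ = gibbsAvg φ m s x (fun y => m * deriv φ y ^ 2) := (weightedAvg_const_mul m).symm
    _ ≤ gibbsAvg φ m s x (fun y => deriv (deriv φ) y + m * deriv φ y ^ 2) :=
        weightedAvg_mono hw₀ (by simpa only [mul_assoc] using hφ'2i.const_mul m)
          (integrable_mul_gibbsWeight hφ hC hm (by fun_prop)
            (abs_deriv_deriv_add_mul_sq_le hC hD hm) x)
          fun z => le_add_of_nonneg_left (hφ'' _)

end ParisiDerivatives

section ParisiProperties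

variable {φ : ℝ → ℝ} {m t C : ℝ}

lemma twiceDiffBounded_parisiF (hφ : TwiceDiffBounded φ) (hm : 0 < m) :
    TwiceDiffBounded (fun x => parisiF φ m x t) := by
  obtain ⟨hφ, hφ', ⟨C, hC⟩, ⟨D, hD⟩⟩ := hφ
  have hw := fun x => integrable_gibbsWeight hφ hC hm.le x (s := √t)
  have hZ := fun x => integral_gibbsWeight_pos hφ hC hm.le x (s := √t)
  refine ⟨fun x => (hasDerivAt_parisiF hφ hC hm x).differentiableAt, ?_,
    ⟨C, fun x => ?_⟩, ⟨D + m * C ^ 2 + m * C ^ 2, fun x => ?_⟩⟩ <;> rw [deriv_parisiF hφ hC hm]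
  · exact fun x => (hasDerivAt_gibbsAvg_deriv hφ hφ' hC hD hm.le x).differentiableAt
  · exact abs_weightedAvg_le (fun z => (gibbsWeight_pos x z).le) (hw x) (hZ x) fun _ => hC _
  · rw [(hasDerivAt_gibbsAvg_deriv hφ hφ' hC hD hm.le x).deriv]
    refine (abs_sub _ _).trans (add_le_add
      (abs_weightedAvg_le (fun z => (gibbsWeight_pos x z).le) (hw x) (hZ x)
        fun _ => abs_deriv_deriv_add_mul_sq_le hC hD hm.le _) ?_)
    rw [abs_mul, abs_of_pos hm, abs_pow]
    exact mul_le_mul_of_nonneg_left (pow_le_pow_left₀ (abs_nonneg _)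
      (abs_weightedAvg_le (fun z => (gibbsWeight_pos x z).le) (hw x) (hZ x) fun _ => hC _) 2) hm.le

lemma monotone_parisiF (hφ : Differentiable ℝ φ) (hC : ∀ y, |deriv φ y| ≤ C)
    (hmono : Monotone φ) (hm : 0 < m) : Monotone (fun x => parisiF φ m x t) :=
  monotone_of_hasDerivAt_nonneg (hasDerivAt_parisiF hφ hC hm) fun x =>
    weightedAvg_nonneg (fun z => (gibbsWeight_pos x z).le) fun _ => hmono.deriv_nonneg

lemma convexOn_parisiF (hφ : TwiceDiffBounded φ) (hconv : ConvexOn ℝ univ φ) (hm : 0 < m) :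
    ConvexOn ℝ univ (fun x => parisiF φ m x t) := by
  obtain ⟨hφ, hφ', ⟨C, hC⟩, ⟨D, hD⟩⟩ := hφ
  have hφ'' : ∀ y, 0 ≤ deriv (deriv φ) y := fun _ =>
    (monotone_deriv_of_convexOn hφ hconv).deriv_nonneg
  refine convexOn_univ_of_deriv2_nonneg (fun x => (hasDerivAt_parisiF hφ hC hm x).differentiableAt)
    (by rw [deriv_parisiF hφ hC hm]
        exact fun x => (hasDerivAt_gibbsAvg_deriv hφ hφ' hC hD hm.le x).differentiableAt)
    fun x => ?_
  rw [Function.iterate_succ, Function.iterate_one, Function.comp_apply, deriv_parisiF hφ hC hm,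
    (hasDerivAt_gibbsAvg_deriv hφ hφ' hC hD hm.le x).deriv, sub_nonneg]
  exact mul_sq_gibbsAvg_deriv_le hφ hC hD hφ'' hm.le x

end ParisiProperties

section ParisiComparison

variable {φ₁ φ₂ : ℝ → ℝ} {m₁ m₂ t C₁ C₂ : ℝ}

lemma parisiF_le_parisiF (hφ₁ : Differentiable ℝ φ₁) (hC₁ : ∀ y, |deriv φ₁ y| ≤ C₁)
    (hφ₂ : Differentiable ℝ φ₂) (hC₂ : ∀ y, |deriv φ₂ y| ≤ C₂) (hm₁ : 0 < m₁) (hm₁₂ : m₁ ≤ m₂)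
    (h₁₂ : ∀ y, φ₁ y ≤ φ₂ y) (x : ℝ) : parisiF φ₁ m₁ x t ≤ parisiF φ₂ m₂ x t := by
  have hm₂ : 0 ≤ m₂ := hm₁.le.trans hm₁₂
  calc parisiF φ₁ m₁ x t ≤ parisiF φ₂ m₁ x t :=
        mul_le_mul_of_nonneg_left (log_le_log (integral_gibbsWeight_pos hφ₁ hC₁ hm₁.le x)
          (integral_mono (integrable_gibbsWeight hφ₁ hC₁ hm₁.le x)
            (integrable_gibbsWeight hφ₂ hC₂ hm₁.le x)
            fun z => exp_le_exp.2 (mul_le_mul_of_nonneg_left (h₁₂ _) hm₁.le))) (by positivity)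
    _ ≤ parisiF φ₂ m₂ x t := inv_mul_log_integral_exp_mul_le hm₁ hm₁₂
        (integrable_gibbsWeight hφ₂ hC₂ hm₁.le x) (integrable_gibbsWeight hφ₂ hC₂ hm₂ x)

lemma gibbsAvg_le_gibbsAvg_of_monotone {f : ℝ → ℝ} {s K x : ℝ}
    (hφ₁ : Differentiable ℝ φ₁) (hC₁ : ∀ y, |deriv φ₁ y| ≤ C₁)
    (hφ₂ : Differentiable ℝ φ₂) (hC₂ : ∀ y, |deriv φ₂ y| ≤ C₂) (hm₁ : 0 ≤ m₁) (hm₂ : 0 ≤ m₂)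
    (hs : 0 ≤ s) (hf : Monotone f) (hK : ∀ y, |f y| ≤ K)
    (hratio : Monotone fun y => m₂ * φ₂ y - m₁ * φ₁ y) :
    gibbsAvg φ₁ m₁ s x f ≤ gibbsAvg φ₂ m₂ s x f := by
  have hshift : Monotone fun z => x + s * z := fun a b hab => by
    have := mul_le_mul_of_nonneg_left hab hs
    linarith
  refine weightedAvg_le_weightedAvg_of_monotone (integrable_gibbsWeight hφ₁ hC₁ hm₁ x)
    (integrable_gibbsWeight hφ₂ hC₂ hm₂ x)
    (integrable_mul_gibbsWeight hφ₁ hC₁ hm₁ hf.measurable hK x)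
    (integrable_mul_gibbsWeight hφ₂ hC₂ hm₂ hf.measurable hK x)
    (integral_gibbsWeight_pos hφ₁ hC₁ hm₁ x) (integral_gibbsWeight_pos hφ₂ hC₂ hm₂ x)
    (hf.comp hshift) fun a b hab => ?_
  simp only [gibbsWeight, ← exp_add]
  have := hratio (hshift hab)
  exact exp_le_exp.2 (by linarith)

lemma deriv_parisiF_le (hφ₁ : Differentiable ℝ φ₁) (hC₁ : ∀ y, |deriv φ₁ y| ≤ C₁)
    (hφ₂ : Differentiable ℝ φ₂) (hC₂ : ∀ y, |deriv φ₂ y| ≤ C₂) (hm₁ : 0 < m₁) (hm₁₂ : m₁ ≤ m₂)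
    (hmono₂ : Monotone φ₂) (hmono₂' : Monotone (deriv φ₂)) (hd₁₂ : ∀ y, deriv φ₁ y ≤ deriv φ₂ y)
    (x : ℝ) : deriv (fun x => parisiF φ₁ m₁ x t) x ≤ deriv (fun x => parisiF φ₂ m₂ x t) x := by
  have hm₂ : 0 < m₂ := hm₁.trans_le hm₁₂
  have hratio : Monotone fun y => m₂ * φ₂ y - m₁ * φ₁ y :=
    monotone_of_hasDerivAt_nonneg
      (fun y => ((hφ₂ y).hasDerivAt.const_mul m₂).sub ((hφ₁ y).hasDerivAt.const_mul m₁))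
      fun y => by
        have := mul_le_mul_of_nonneg_left (hd₁₂ y) hm₁.le
        have := mul_le_mul_of_nonneg_right hm₁₂ (hmono₂.deriv_nonneg (x := y))
        simp only [Pi.zero_apply, sub_nonneg]
        linarith
  rw [deriv_parisiF hφ₁ hC₁ hm₁, deriv_parisiF hφ₂ hC₂ hm₂]
  calc gibbsAvg φ₁ m₁ √t x (deriv φ₁) ≤ gibbsAvg φ₁ m₁ √t x (deriv φ₂) :=
        weightedAvg_mono (fun z => (gibbsWeight_pos x z).le)
          (integrable_mul_gibbsWeight hφ₁ hC₁ hm₁.le (measurable_deriv φ₁) hC₁ x)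
          (integrable_mul_gibbsWeight hφ₁ hC₁ hm₁.le (measurable_deriv φ₂) hC₂ x)
          fun _ => hd₁₂ _
    _ ≤ gibbsAvg φ₂ m₂ √t x (deriv φ₂) :=
        gibbsAvg_le_gibbsAvg_of_monotone hφ₁ hC₁ hφ₂ hC₂ hm₁.le hm₂.le (sqrt_nonneg t) hmono₂' hC₂
          hratio

end ParisiComparison

theorem parisi_preserves_nondec_pair (φ1 φ2 : ℝ → ℝ) (h : AdmissibleNondecPair φ1 φ2)
    (m1 m2 : ℝ) (hm1 : 0 < m1) (hm12 : m1 ≤ m2) :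
    ∀ t ∈ Set.Icc (0 : ℝ) 1,
      AdmissibleNondecPair (fun x => parisiF φ1 m1 x t) (fun x => parisiF φ2 m2 x t) := by
  intro t _
  obtain ⟨hφ1, hφ2, hmono1, hmono2, hconv1, hconv2, h12, hd12⟩ := h
  obtain ⟨C1, hC1⟩ := hφ1.2.2.1
  obtain ⟨C2, hC2⟩ := hφ2.2.2.1
  have hm2 : 0 < m2 := hm1.trans_le hm12
  exact ⟨twiceDiffBounded_parisiF hφ1 hm1, twiceDiffBounded_parisiF hφ2 hm2,
    monotone_parisiF hφ1.1 hC1 hmono1 hm1, monotone_parisiF hφ2.1 hC2 hmono2 hm2,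
    convexOn_parisiF hφ1 hconv1 hm1, convexOn_parisiF hφ2 hconv2 hm2,
    parisiF_le_parisiF hφ1.1 hC1 hφ2.1 hC2 hm1 hm12 h12,
    deriv_parisiF_le hφ1.1 hC1 hφ2.1 hC2 hm1 hm12 hmono2
      (monotone_deriv_of_convexOn hφ2.1 hconv2) hd12⟩
end

section
/- Let g be a centered Gaussian random variable with variance σ² > 0 and let f1, f2 : ℝ → ℝ be measurable odd functions such that E|f1(x + g)| < ∞ and E|f2(x + g)| < ∞ for every x ∈ ℝ. If f1(u) ≤ f2(u) for all u ≥ 0, then E[f1(x + g)] ≤ E[f2(x + g)] for all x ≥ 0. -/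
/-!
Translating by `x`, `E g(x + Z) = ∫ φ(v - x) g(v) dv` with `φ` the centred Gaussian density.
Folding the negative half-line onto the positive one using that `g` is odd gives
`∫_{v > 0} (φ(v - x) - φ(v + x)) g(v) dv`, whose integrand is nonnegative because `φ` decreases
in `|·|` and `|v - x| ≤ v + x`. Apply this to `g = f2 - f1`.
-/

open MeasureTheory ProbabilityTheory Set

theorem integral_eq_integral_Ioi_add_comp_neg {k : ℝ → ℝ} (hk : Integrable k) :
    ∫ v, k v = ∫ v in Ioi 0, (k v + k (-v)) := by
  rw [← intervalIntegral.integral_Iic_add_Ioi hk.integrableOn hk.integrableOn,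
    integral_add hk.integrableOn hk.comp_neg.integrableOn, add_comm, ← neg_zero,
    ← integral_comp_neg_Ioi, neg_zero]

theorem integral_comp_sub_mul_nonneg_of_odd {φ g : ℝ → ℝ}
    (hφ : ∀ a b, |a| ≤ |b| → φ b ≤ φ a) (hg_odd : ∀ u, g (-u) = -g u)
    (hg_nonneg : ∀ u, 0 ≤ u → 0 ≤ g u) {x : ℝ} (hx : 0 ≤ x)
    (hint : Integrable fun v ↦ φ (v - x) * g v) :
    0 ≤ ∫ v, φ (v - x) * g v := by
  rw [integral_eq_integral_Ioi_add_comp_neg hint]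
  refine setIntegral_nonneg measurableSet_Ioi fun v (hv : 0 < v) ↦ ?_
  have h_abs : |v - x| ≤ |-v - x| := by
    rw [abs_le, abs_of_nonpos (by linarith)]
    constructor <;> linarith
  rw [hg_odd, mul_neg, ← sub_eq_add_neg, ← sub_mul]
  exact mul_nonneg (sub_nonneg.2 (hφ _ _ h_abs)) (hg_nonneg v hv.le)

theorem gaussianPDFReal_le_of_abs_sub_le {μ : ℝ} (v : NNReal) {a b : ℝ}
    (h : |a - μ| ≤ |b - μ|) : gaussianPDFReal μ v b ≤ gaussianPDFReal μ v a := by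
  rw [gaussianPDFReal, gaussianPDFReal]
  gcongr _ * Real.exp ?_
  exact div_le_div_of_nonneg_right (neg_le_neg (sq_le_sq.2 h)) (by positivity)

theorem MeasureTheory.Integrable.gaussianPDFReal_mul {μ : ℝ} {v : NNReal} (hv : v ≠ 0) {g : ℝ → ℝ}
    (hg : Integrable g (gaussianReal μ v)) : Integrable fun u ↦ gaussianPDFReal μ v u * g u := by
  rw [gaussianReal_of_var_ne_zero _ hv,
    integrable_withDensity_iff_integrable_smul' (measurable_gaussianPDF μ v)
      (ae_of_all _ fun _ ↦ gaussianPDF_lt_top)] at hg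
  simpa only [toReal_gaussianPDF, smul_eq_mul] using hg

theorem integral_gaussianReal_nonneg_of_odd {g : ℝ → ℝ} (hg_odd : ∀ u, g (-u) = -g u)
    (hg_nonneg : ∀ u, 0 ≤ u → 0 ≤ g u) {μ : ℝ} (hμ : 0 ≤ μ) (v : NNReal)
    (hint : Integrable g (gaussianReal μ v)) : 0 ≤ ∫ u, g u ∂gaussianReal μ v := by
  rcases eq_or_ne v 0 with rfl | hv
  · rw [gaussianReal_zero_var, integral_dirac]
    exact hg_nonneg μ hμ
  have h_pdf : ∀ u, gaussianPDFReal μ v u = gaussianPDFReal 0 v (u - μ) := fun u ↦ by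
    rw [gaussianPDFReal_sub, zero_add]
  rw [integral_gaussianReal_eq_integral_smul hv]
  simp only [smul_eq_mul, h_pdf]
  refine integral_comp_sub_mul_nonneg_of_odd (fun a b h ↦ ?_) hg_odd hg_nonneg hμ ?_
  · simpa using gaussianPDFReal_le_of_abs_sub_le (μ := 0) v (by simpa using h)
  · simpa only [h_pdf] using hint.gaussianPDFReal_mul hv

theorem integral_comp_const_add_gaussianReal {μ : ℝ} {v : NNReal} (f : ℝ → ℝ) (x : ℝ) :
    ∫ u, f (x + u) ∂gaussianReal μ v = ∫ u, f u ∂gaussianReal (μ + x) v := by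
  rw [← gaussianReal_map_const_add, (measurableEmbedding_addLeft x).integral_map]

theorem integrable_comp_const_add_gaussianReal_iff {μ : ℝ} {v : NNReal} {f : ℝ → ℝ} (x : ℝ) :
    Integrable (fun u ↦ f (x + u)) (gaussianReal μ v) ↔ Integrable f (gaussianReal (μ + x) v) := by
  rw [← gaussianReal_map_const_add, (measurableEmbedding_addLeft x).integrable_map_iff]
  rfl

theorem odd_gaussian_expectation_mono_general (σ2 : NNReal)
    (f1 f2 : ℝ → ℝ)
    (hodd1 : ∀ u, f1 (-u) = -f1 u) (hodd2 : ∀ u, f2 (-u) = -f2 u)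
    (hint1 : ∀ x : ℝ, Integrable (fun u => f1 (x + u)) (gaussianReal 0 σ2))
    (hint2 : ∀ x : ℝ, Integrable (fun u => f2 (x + u)) (gaussianReal 0 σ2))
    (hle : ∀ u : ℝ, 0 ≤ u → f1 u ≤ f2 u) :
    ∀ x : ℝ, 0 ≤ x →
      ∫ u, f1 (x + u) ∂(gaussianReal 0 σ2) ≤ ∫ u, f2 (x + u) ∂(gaussianReal 0 σ2) := by
  intro x hx
  rw [← sub_nonneg, ← integral_sub (hint2 x) (hint1 x),
    integral_comp_const_add_gaussianReal (fun u ↦ f2 u - f1 u), zero_add]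
  refine integral_gaussianReal_nonneg_of_odd (fun u ↦ ?_) (fun u hu ↦ sub_nonneg.2 (hle u hu))
    hx σ2 ?_
  · rw [hodd1, hodd2, neg_sub_neg, neg_sub]
  · rw [← zero_add x, ← integrable_comp_const_add_gaussianReal_iff]
    exact (hint2 x).sub (hint1 x)

theorem odd_gaussian_expectation_mono (σ2 : NNReal) (hσ : 0 < σ2)
    (f1 f2 : ℝ → ℝ) (hf1 : Measurable f1) (hf2 : Measurable f2)
    (hodd1 : ∀ u, f1 (-u) = -f1 u) (hodd2 : ∀ u, f2 (-u) = -f2 u)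
    (hint1 : ∀ x : ℝ, Integrable (fun u => f1 (x + u)) (gaussianReal 0 σ2))
    (hint2 : ∀ x : ℝ, Integrable (fun u => f2 (x + u)) (gaussianReal 0 σ2))
    (hle : ∀ u : ℝ, 0 ≤ u → f1 u ≤ f2 u) :
    ∀ x : ℝ, 0 ≤ x →
      ∫ u, f1 (x + u) ∂(gaussianReal 0 σ2) ≤ ∫ u, f2 (x + u) ∂(gaussianReal 0 σ2) :=
  odd_gaussian_expectation_mono_general σ2 f1 f2 hodd1 hodd2 hint1 hint2 hle
end

section
/- Let g be a centered Gaussian random variable with variance σ² > 0, let W : ℝ² → [0,∞) be measurable with E[W(x, x + g)] = 1 for every x ∈ ℝ, and let f1, f2 : ℝ → ℝ be nondecreasing measurable functions such that f1(x+g)·f2(x+g)·W(x,x+g), f1(x+g)·W(x,x+g) and f2(x+g)·W(x,x+g) are integrable for every x. Then for every x ∈ ℝ, E[f1(x+g)·f2(x+g)·W(x, x+g)] ≥ E[f1(x+g)·W(x, x+g)] · E[f2(x+g)·W(x, x+g)]. -/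
/-!
In one dimension FKG is Chebyshev's integral inequality. For monovarying `f, g` and a weight
`w ≥ 0`, the integral of `(f a - f b) * (g a - g b) * w a * w b` over `μ.prod μ` is nonnegative,
and expanding it gives `2 * ((∫ f g w) * (∫ w) - (∫ f w) * (∫ g w))`. Here the weight is
`W x (x + ·)`, of total mass `1` under `gaussianReal 0 σ2`.
-/

open MeasureTheory ProbabilityTheory Set

section Chebyshev

variable {α : Type*} [MeasurableSpace α] {μ : Measure α} [SFinite μ] {f g w : α → ℝ}

theorem integral_prod_sub_mul_sub_mul_weight (hw : Integrable w μ)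
    (hfgw : Integrable (fun a => f a * g a * w a) μ)
    (hfw : Integrable (fun a => f a * w a) μ) (hgw : Integrable (fun a => g a * w a) μ) :
    ∫ p, (f p.1 - f p.2) * (g p.1 - g p.2) * (w p.1 * w p.2) ∂μ.prod μ
      = 2 * ((∫ a, f a * g a * w a ∂μ) * (∫ a, w a ∂μ)
        - (∫ a, f a * w a ∂μ) * ∫ a, g a * w a ∂μ) := by
  have expand : (fun p : α × α => (f p.1 - f p.2) * (g p.1 - g p.2) * (w p.1 * w p.2))
      = fun p => f p.1 * g p.1 * w p.1 * w p.2 + w p.1 * (f p.2 * g p.2 * w p.2)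
          - f p.1 * w p.1 * (g p.2 * w p.2) - g p.1 * w p.1 * (f p.2 * w p.2) := by
    funext p; ring
  have hA := hfgw.mul_prod hw
  have hA' := hw.mul_prod hfgw
  have hB := hfw.mul_prod hgw
  have hB' := hgw.mul_prod hfw
  rw [expand, integral_sub (by exact (hA.add hA').sub hB) hB',
    integral_sub (by exact hA.add hA') hB, integral_add hA hA',
    integral_prod_mul (fun a => f a * g a * w a) w,
    integral_prod_mul w (fun a => f a * g a * w a),
    integral_prod_mul (fun a => f a * w a) (fun a => g a * w a),
    integral_prod_mul (fun a => g a * w a) (fun a => f a * w a)]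
  ring

theorem Monovary.integral_mul_weight_mul_le (hfg : Monovary f g) (hw₀ : 0 ≤ w)
    (hw : Integrable w μ) (hfgw : Integrable (fun a => f a * g a * w a) μ)
    (hfw : Integrable (fun a => f a * w a) μ) (hgw : Integrable (fun a => g a * w a) μ) :
    (∫ a, f a * w a ∂μ) * (∫ a, g a * w a ∂μ)
      ≤ (∫ a, f a * g a * w a ∂μ) * ∫ a, w a ∂μ := by
  have hnonneg : 0 ≤ ∫ p, (f p.1 - f p.2) * (g p.1 - g p.2) * (w p.1 * w p.2) ∂μ.prod μ :=
    integral_nonneg fun p =>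
      mul_nonneg (hfg.sub_mul_sub_nonneg p.2 p.1) (mul_nonneg (hw₀ p.1) (hw₀ p.2))
  rw [integral_prod_sub_mul_sub_mul_weight hw hfgw hfw hgw] at hnonneg
  linarith

end Chebyshev

theorem fkg_gaussian_tilted_general (σ2 : NNReal)
    (W : ℝ → ℝ → ℝ)
    (hWnonneg : ∀ x y, 0 ≤ W x y)
    (hWnorm : ∀ x : ℝ, ∫ u, W x (x + u) ∂(gaussianReal 0 σ2) = 1)
    (f1 f2 : ℝ → ℝ)
    (hf1mono : Monotone f1) (hf2mono : Monotone f2)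
    (hint12 : ∀ x : ℝ,
      Integrable (fun u => f1 (x + u) * f2 (x + u) * W x (x + u)) (gaussianReal 0 σ2))
    (hint1 : ∀ x : ℝ, Integrable (fun u => f1 (x + u) * W x (x + u)) (gaussianReal 0 σ2))
    (hint2 : ∀ x : ℝ, Integrable (fun u => f2 (x + u) * W x (x + u)) (gaussianReal 0 σ2)) :
    ∀ x : ℝ,
      (∫ u, f1 (x + u) * W x (x + u) ∂(gaussianReal 0 σ2)) *
          (∫ u, f2 (x + u) * W x (x + u) ∂(gaussianReal 0 σ2))
        ≤ ∫ u, f1 (x + u) * f2 (x + u) * W x (x + u) ∂(gaussianReal 0 σ2) := by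
  intro x
  have hWint : Integrable (fun u => W x (x + u)) (gaussianReal 0 σ2) :=
    Integrable.of_integral_ne_zero (by rw [hWnorm x]; exact one_ne_zero)
  have hmono : Monovary (fun u => f1 (x + u)) (fun u => f2 (x + u)) :=
    (hf1mono.monovary hf2mono).comp_right (x + ·)
  simpa [hWnorm x] using hmono.integral_mul_weight_mul_le (fun u => hWnonneg x (x + u))
    hWint (hint12 x) (hint1 x) (hint2 x)

theorem fkg_gaussian_tilted (σ2 : NNReal) (hσ : 0 < σ2)
    (W : ℝ → ℝ → ℝ) (hWmeas : Measurable (Function.uncurry W))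
    (hWnonneg : ∀ x y, 0 ≤ W x y)
    (hWnorm : ∀ x : ℝ, ∫ u, W x (x + u) ∂(gaussianReal 0 σ2) = 1)
    (f1 f2 : ℝ → ℝ) (hf1meas : Measurable f1) (hf2meas : Measurable f2)
    (hf1mono : Monotone f1) (hf2mono : Monotone f2)
    (hint12 : ∀ x : ℝ,
      Integrable (fun u => f1 (x + u) * f2 (x + u) * W x (x + u)) (gaussianReal 0 σ2))
    (hint1 : ∀ x : ℝ, Integrable (fun u => f1 (x + u) * W x (x + u)) (gaussianReal 0 σ2))
    (hint2 : ∀ x : ℝ, Integrable (fun u => f2 (x + u) * W x (x + u)) (gaussianReal 0 σ2)) :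
    ∀ x : ℝ,
      (∫ u, f1 (x + u) * W x (x + u) ∂(gaussianReal 0 σ2)) *
          (∫ u, f2 (x + u) * W x (x + u) ∂(gaussianReal 0 σ2))
        ≤ ∫ u, f1 (x + u) * f2 (x + u) * W x (x + u) ∂(gaussianReal 0 σ2) :=
  fkg_gaussian_tilted_general σ2 W hWnonneg hWnorm f1 f2 hf1mono hf2mono hint12 hint1 hint2
end

section
/- Let (φ1, φ2) be an admissible even pair. Then there exist sequences of functions (φ_{1,r})_{r≥1}, (φ_{2,r})_{r≥1} and positive reals (M_r)_{r≥1} such that for every r: (φ_{1,r}, φ_{2,r}) is an admissible even pair; for l = 1,2, φ_{l,r} is affine on (−∞, −M_r] and affine on [M_r, ∞); φ_{l,r} ≤ φ_l pointwise; and φ_{l,r}(x) → φ_l(x) as r → ∞ for every x ∈ ℝ. -/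
/-!
Replace `φ'` by `φ' ∘ θ_R`, where `θ_R` is a smooth, odd, nondecreasing, `1`-Lipschitz clamp that
is the identity on `[-R, R]` and constant on `|x| ≥ R + 1`, and integrate back from `φ 0`. The
result `ψ_R` agrees with `φ` on `[-R, R]` (whence pointwise convergence) and is affine on the
tails. Since `θ_R x` lies between `0` and `x`, monotonicity of `φ'` gives `ψ_R' ≤ φ'` on
`[0, ∞)` and `ψ_R' ≥ φ'` on `(-∞, 0]`, so `ψ_R ≤ φ`; the same sign argument compares `ψ_R` for
the two members of the pair.
-/

open MeasureTheory Set Filter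

/-- An admissible even pair. -/
def AdmissibleEvenPair (φ1 φ2 : ℝ → ℝ) : Prop :=
  TwiceDiffBounded φ1 ∧ TwiceDiffBounded φ2 ∧
    (∀ x, φ1 (-x) = φ1 x) ∧ (∀ x, φ2 (-x) = φ2 x) ∧
    ConvexOn ℝ Set.univ φ1 ∧ ConvexOn ℝ Set.univ φ2 ∧
    (∀ x, φ1 x ≤ φ2 x) ∧ (∀ x, 0 ≤ x → deriv φ1 x ≤ deriv φ2 x)

open intervalIntegral Topology

lemma Function.Even.deriv_odd {f : ℝ → ℝ} (hf : Function.Even f) : Function.Odd (deriv f) := by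
  intro x
  have h := deriv_comp_neg (f := f) (x := x)
  rw [show (fun y => f (-y)) = f from funext hf] at h
  linarith

lemma even_of_deriv_odd {f : ℝ → ℝ} (hf : Differentiable ℝ f) (hf' : Function.Odd (deriv f)) :
    Function.Even f := by
  intro x
  have hderiv : ∀ y, deriv (fun y => f (-y) - f y) y = 0 := fun y => by
    rw [deriv_fun_sub (by fun_prop) (hf y), deriv_comp_neg, hf', neg_neg, sub_self]
  have := is_const_of_deriv_eq_zero (hf.comp differentiable_neg |>.sub hf) hderiv x 0
  simpa [sub_eq_zero] using this

lemma odd_of_deriv_even {f : ℝ → ℝ} (hf : Differentiable ℝ f) (h0 : f 0 = 0)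
    (hf' : Function.Even (deriv f)) : Function.Odd f := by
  intro x
  have hderiv : ∀ y, deriv (fun y => f (-y) + f y) y = 0 := fun y => by
    rw [deriv_fun_add (by fun_prop) (hf y), deriv_comp_neg, hf', neg_add_cancel]
  have := is_const_of_deriv_eq_zero (hf.comp differentiable_neg |>.add hf) hderiv x 0
  simp only [Pi.add_apply, Function.comp_apply, neg_zero, h0, add_zero] at this
  linarith

lemma ConvexOn.monotone_deriv {f : ℝ → ℝ} (hf : ConvexOn ℝ univ f) (hd : Differentiable ℝ f) :
    Monotone (deriv f) :=
  monotoneOn_univ.mp (hf.monotoneOn_deriv fun x _ => hd x)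

lemma deriv_le_deriv_of_nonpos_of_even {φ₁ φ₂ : ℝ → ℝ} (h₁ : Function.Even φ₁)
    (h₂ : Function.Even φ₂) (hle : ∀ x, 0 ≤ x → deriv φ₁ x ≤ deriv φ₂ x) {x : ℝ} (hx : x ≤ 0) :
    deriv φ₂ x ≤ deriv φ₁ x := by
  have := hle (-x) (neg_nonneg.mpr hx)
  rw [h₁.deriv_odd, h₂.deriv_odd] at this
  linarith

lemma le_of_deriv_le_of_nonneg_of_le_of_nonpos {f g : ℝ → ℝ} (hf : Differentiable ℝ f)
    (hg : Differentiable ℝ g) (h0 : f 0 ≤ g 0) (hpos : ∀ x, 0 ≤ x → deriv f x ≤ deriv g x)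
    (hneg : ∀ x, x ≤ 0 → deriv g x ≤ deriv f x) (x : ℝ) : f x ≤ g x := by
  have hd : Differentiable ℝ (g - f) := hg.sub hf
  have hderiv : ∀ y, deriv (g - f) y = deriv g y - deriv f y := fun y => deriv_sub (hg y) (hf y)
  rcases le_total 0 x with hx | hx
  · have hmono : MonotoneOn (g - f) (Ici 0) :=
      monotoneOn_of_deriv_nonneg (convex_Ici 0) hd.continuous.continuousOn hd.differentiableOn
        fun y hy => by
          rw [hderiv]
          exact sub_nonneg.mpr (hpos y (interior_subset hy : y ∈ Ici 0))
    have := hmono self_mem_Ici hx hx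
    simp only [Pi.sub_apply] at this
    linarith
  · have hanti : AntitoneOn (g - f) (Iic 0) :=
      antitoneOn_of_deriv_nonpos (convex_Iic 0) hd.continuous.continuousOn hd.differentiableOn
        fun y hy => by
          rw [hderiv]
          exact sub_nonpos.mpr (hneg y (interior_subset hy : y ∈ Iic 0))
    have := hanti hx self_mem_Iic hx
    simp only [Pi.sub_apply] at this
    linarith

lemma eq_affine_of_hasDerivAt_of_le {f : ℝ → ℝ} {a A : ℝ} (hf : ∀ x, a ≤ x → HasDerivAt f A x)
    {x : ℝ} (hx : a ≤ x) : f x = A * x + (f a - A * a) := by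
  have hg : ∀ y, a ≤ y → HasDerivAt (fun y => f y - A * y) 0 y := fun y hy => by
    simpa using (hf y hy).fun_sub ((hasDerivAt_id y).const_mul A)
  have := constant_of_has_deriv_right_zero (a := a) (b := x)
    (fun y hy => (hg y hy.1).continuousAt.continuousWithinAt)
    (fun y hy => (hg y hy.1).hasDerivWithinAt) x ⟨hx, le_rfl⟩
  linarith

lemma Function.Even.eq_affine_of_le_neg {f : ℝ → ℝ} (hf : Function.Even f) {a A B : ℝ}
    (h : ∀ x, a ≤ x → f x = A * x + B) {x : ℝ} (hx : x ≤ -a) : f x = -A * x + B := by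
  rw [← hf, h (-x) (by linarith)]
  ring

lemma abs_le_abs_of_mem_uIcc_zero {t x : ℝ} (ht : t ∈ uIcc 0 x) : |t| ≤ |x| := by
  simpa using abs_sub_left_of_mem_uIcc ht

noncomputable def smoothCutoff (R t : ℝ) : ℝ := Real.smoothTransition (R + 1 - |t|)

lemma smoothCutoff_continuous (R : ℝ) : Continuous (smoothCutoff R) :=
  Real.smoothTransition.continuous.comp (by fun_prop)

lemma smoothCutoff_nonneg (R t : ℝ) : 0 ≤ smoothCutoff R t := Real.smoothTransition.nonneg _

lemma smoothCutoff_le_one (R t : ℝ) : smoothCutoff R t ≤ 1 := Real.smoothTransition.le_one _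

lemma smoothCutoff_even (R : ℝ) : Function.Even (smoothCutoff R) := by
  intro t
  simp [smoothCutoff]

lemma smoothCutoff_eq_one {R t : ℝ} (h : |t| ≤ R) : smoothCutoff R t = 1 :=
  Real.smoothTransition.one_of_one_le (by linarith)

lemma smoothCutoff_eq_zero {R t : ℝ} (h : R + 1 ≤ |t|) : smoothCutoff R t = 0 :=
  Real.smoothTransition.zero_of_nonpos (by linarith)

noncomputable def smoothClamp (R x : ℝ) : ℝ := ∫ t in (0 : ℝ)..x, smoothCutoff R t

lemma smoothClamp_hasDerivAt (R x : ℝ) : HasDerivAt (smoothClamp R) (smoothCutoff R x) x :=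
  ((smoothCutoff_continuous R).integral_hasStrictDerivAt 0 x).hasDerivAt

lemma smoothClamp_differentiable (R : ℝ) : Differentiable ℝ (smoothClamp R) :=
  fun x => (smoothClamp_hasDerivAt R x).differentiableAt

lemma smoothClamp_deriv (R : ℝ) : deriv (smoothClamp R) = smoothCutoff R :=
  funext fun x => (smoothClamp_hasDerivAt R x).deriv

lemma smoothClamp_zero (R : ℝ) : smoothClamp R 0 = 0 := integral_same

lemma smoothClamp_monotone (R : ℝ) : Monotone (smoothClamp R) :=
  monotone_of_deriv_nonneg (smoothClamp_differentiable R) fun x => by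
    rw [smoothClamp_deriv]
    exact smoothCutoff_nonneg R x

lemma smoothClamp_odd (R : ℝ) : Function.Odd (smoothClamp R) :=
  odd_of_deriv_even (smoothClamp_differentiable R) (smoothClamp_zero R)
    (by rw [smoothClamp_deriv]; exact smoothCutoff_even R)

lemma smoothClamp_eq_self {R x : ℝ} (h : |x| ≤ R) : smoothClamp R x = x := by
  have : ∫ t in (0 : ℝ)..x, smoothCutoff R t = ∫ t in (0 : ℝ)..x, (1 : ℝ) :=
    integral_congr fun t ht => smoothCutoff_eq_one ((abs_le_abs_of_mem_uIcc_zero ht).trans h)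
  simp [smoothClamp, this]

lemma smoothClamp_sub_self_antitone (R : ℝ) : Antitone fun x => smoothClamp R x - x := by
  have hd : ∀ x, HasDerivAt (fun x => smoothClamp R x - x) (smoothCutoff R x - 1) x :=
    fun x => (smoothClamp_hasDerivAt R x).sub (hasDerivAt_id x)
  exact antitone_of_deriv_nonpos (fun x => (hd x).differentiableAt) fun x => by
    rw [(hd x).deriv]
    linarith [smoothCutoff_le_one R x]

lemma smoothClamp_le_self {R x : ℝ} (hx : 0 ≤ x) : smoothClamp R x ≤ x := by
  have := smoothClamp_sub_self_antitone R hx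
  simp only [smoothClamp_zero, sub_zero] at this
  linarith

lemma self_le_smoothClamp {R x : ℝ} (hx : x ≤ 0) : x ≤ smoothClamp R x := by
  have := smoothClamp_sub_self_antitone R hx
  simp only [smoothClamp_zero, sub_zero] at this
  linarith

lemma smoothClamp_nonneg {R x : ℝ} (hx : 0 ≤ x) : 0 ≤ smoothClamp R x :=
  smoothClamp_zero R ▸ smoothClamp_monotone R hx

lemma smoothClamp_nonpos {R x : ℝ} (hx : x ≤ 0) : smoothClamp R x ≤ 0 :=
  smoothClamp_zero R ▸ smoothClamp_monotone R hx

lemma smoothClamp_eq_of_le {R x : ℝ} (hx : R + 1 ≤ x) :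
    smoothClamp R x = smoothClamp R (R + 1) := by
  have := eq_affine_of_hasDerivAt_of_le (f := smoothClamp R) (A := 0) (fun y hy => by
    simpa [smoothCutoff_eq_zero (hy.trans (le_abs_self y))] using smoothClamp_hasDerivAt R y) hx
  simpa using this

noncomputable def linearizeTails (R : ℝ) (φ : ℝ → ℝ) (x : ℝ) : ℝ :=
  φ 0 + ∫ t in (0 : ℝ)..x, deriv φ (smoothClamp R t)

section LinearizeTails

variable {φ : ℝ → ℝ}

lemma linearizeTails_hasDerivAt (R : ℝ) (hφ' : Continuous (deriv φ)) (x : ℝ) :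
    HasDerivAt (linearizeTails R φ) (deriv φ (smoothClamp R x)) x :=
  (((hφ'.comp (smoothClamp_differentiable R).continuous).integral_hasStrictDerivAt 0 x).hasDerivAt
    ).const_add _

lemma linearizeTails_differentiable (R : ℝ) (hφ' : Continuous (deriv φ)) :
    Differentiable ℝ (linearizeTails R φ) :=
  fun x => (linearizeTails_hasDerivAt R hφ' x).differentiableAt

lemma linearizeTails_deriv (R : ℝ) (hφ' : Continuous (deriv φ)) :
    deriv (linearizeTails R φ) = fun x => deriv φ (smoothClamp R x) :=
  funext fun x => (linearizeTails_hasDerivAt R hφ' x).deriv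

lemma linearizeTails_zero (R : ℝ) : linearizeTails R φ 0 = φ 0 := by
  simp [linearizeTails]

lemma linearizeTails_even (R : ℝ) (hφ' : Continuous (deriv φ)) (hφ : Function.Even φ) :
    Function.Even (linearizeTails R φ) :=
  even_of_deriv_odd (linearizeTails_differentiable R hφ') fun x => by
    simp only [linearizeTails_deriv R hφ', smoothClamp_odd R x, hφ.deriv_odd _]

lemma linearizeTails_eq {R x : ℝ} (hφ : Differentiable ℝ φ) (hφ' : Continuous (deriv φ))
    (hx : |x| ≤ R) : linearizeTails R φ x = φ x := by
  have : ∫ t in (0 : ℝ)..x, deriv φ (smoothClamp R t) = ∫ t in (0 : ℝ)..x, deriv φ t :=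
    integral_congr fun t ht => by
      rw [smoothClamp_eq_self ((abs_le_abs_of_mem_uIcc_zero ht).trans hx)]
  rw [linearizeTails, this, integral_deriv_eq_sub (fun t _ => hφ t) (hφ'.intervalIntegrable 0 x)]
  ring

lemma linearizeTails_le (R : ℝ) (hφ : Differentiable ℝ φ) (hφ' : Continuous (deriv φ))
    (hmono : Monotone (deriv φ)) (x : ℝ) : linearizeTails R φ x ≤ φ x := by
  refine le_of_deriv_le_of_nonneg_of_le_of_nonpos (linearizeTails_differentiable R hφ') hφ
    (linearizeTails_zero R).le (fun y hy => ?_) (fun y hy => ?_) x <;>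
    rw [linearizeTails_deriv R hφ']
  · exact hmono (smoothClamp_le_self hy)
  · exact hmono (self_le_smoothClamp hy)

lemma linearizeTails_le_linearizeTails (R : ℝ) {ψ : ℝ → ℝ} (hφ' : Continuous (deriv φ))
    (hψ' : Continuous (deriv ψ)) (h0 : φ 0 ≤ ψ 0) (hpos : ∀ x, 0 ≤ x → deriv φ x ≤ deriv ψ x)
    (hneg : ∀ x, x ≤ 0 → deriv ψ x ≤ deriv φ x) (x : ℝ) :
    linearizeTails R φ x ≤ linearizeTails R ψ x := by
  refine le_of_deriv_le_of_nonneg_of_le_of_nonpos (linearizeTails_differentiable R hφ')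
    (linearizeTails_differentiable R hψ') (by simpa only [linearizeTails_zero] using h0)
    (fun y hy => ?_) (fun y hy => ?_) x <;>
    rw [linearizeTails_deriv R hφ', linearizeTails_deriv R hψ']
  · exact hpos _ (smoothClamp_nonneg hy)
  · exact hneg _ (smoothClamp_nonpos hy)

lemma linearizeTails_convexOn (R : ℝ) (hφ' : Continuous (deriv φ)) (hmono : Monotone (deriv φ)) :
    ConvexOn ℝ univ (linearizeTails R φ) :=
  Monotone.convexOn_univ_of_deriv (linearizeTails_differentiable R hφ') <| by
    rw [linearizeTails_deriv R hφ']
    exact hmono.comp (smoothClamp_monotone R)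

lemma exists_linearizeTails_eq_affine_of_le (R : ℝ) (hφ' : Continuous (deriv φ)) :
    ∃ A B : ℝ, ∀ x, R + 1 ≤ x → linearizeTails R φ x = A * x + B :=
  ⟨_, _, fun _ hx => eq_affine_of_hasDerivAt_of_le (fun y hy => by
    simpa only [smoothClamp_eq_of_le hy] using linearizeTails_hasDerivAt R hφ' y) hx⟩

lemma exists_linearizeTails_eq_affine_of_le_neg (R : ℝ) (hφ' : Continuous (deriv φ))
    (hφ : Function.Even φ) : ∃ A B : ℝ, ∀ x, x ≤ -(R + 1) → linearizeTails R φ x = A * x + B :=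
  have ⟨A, B, h⟩ := exists_linearizeTails_eq_affine_of_le R hφ'
  ⟨-A, B, fun _ hx => (linearizeTails_even R hφ' hφ).eq_affine_of_le_neg h hx⟩

lemma tendsto_linearizeTails (hφ : Differentiable ℝ φ) (hφ' : Continuous (deriv φ)) (x : ℝ) :
    Tendsto (fun r : ℕ => linearizeTails r φ x) atTop (𝓝 (φ x)) :=
  tendsto_const_nhds.congr' <|
    (tendsto_natCast_atTop_atTop.eventually_ge_atTop |x|).mono fun _ hr =>
      (linearizeTails_eq hφ hφ' hr).symm

lemma TwiceDiffBounded.linearizeTails (R : ℝ) (h : TwiceDiffBounded φ) :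
    TwiceDiffBounded (_root_.linearizeTails R φ) := by
  obtain ⟨-, hφ', ⟨C₁, hC₁⟩, ⟨C₂, hC₂⟩⟩ := h
  have hd2 : ∀ x, HasDerivAt (deriv (_root_.linearizeTails R φ))
      (deriv (deriv φ) (smoothClamp R x) * smoothCutoff R x) x := fun x => by
    rw [linearizeTails_deriv R hφ'.continuous]
    exact (hφ' _).hasDerivAt.comp x (smoothClamp_hasDerivAt R x)
  refine ⟨linearizeTails_differentiable R hφ'.continuous, fun x => (hd2 x).differentiableAt,
    ⟨C₁, fun x => ?_⟩, ⟨C₂, fun x => ?_⟩⟩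
  · rw [linearizeTails_deriv R hφ'.continuous]
    exact hC₁ _
  · rw [(hd2 x).deriv, abs_mul, abs_of_nonneg (smoothCutoff_nonneg R x)]
    calc |deriv (deriv φ) (smoothClamp R x)| * smoothCutoff R x
        ≤ C₂ * 1 := mul_le_mul (hC₂ _) (smoothCutoff_le_one R x) (smoothCutoff_nonneg R x)
          ((abs_nonneg _).trans (hC₂ 0))
      _ = C₂ := mul_one C₂

end LinearizeTails

lemma AdmissibleEvenPair.linearizeTails {φ₁ φ₂ : ℝ → ℝ} (h : AdmissibleEvenPair φ₁ φ₂) (R : ℝ) :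
    AdmissibleEvenPair (_root_.linearizeTails R φ₁) (_root_.linearizeTails R φ₂) := by
  obtain ⟨h₁, h₂, he₁, he₂, hc₁, hc₂, hle, hdle⟩ := h
  have hc'₁ := h₁.2.1.continuous
  have hc'₂ := h₂.2.1.continuous
  refine ⟨h₁.linearizeTails R, h₂.linearizeTails R, linearizeTails_even R hc'₁ he₁,
    linearizeTails_even R hc'₂ he₂, linearizeTails_convexOn R hc'₁ (hc₁.monotone_deriv h₁.1),
    linearizeTails_convexOn R hc'₂ (hc₂.monotone_deriv h₂.1),
    linearizeTails_le_linearizeTails R hc'₁ hc'₂ (hle 0) hdle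
      fun x hx => deriv_le_deriv_of_nonpos_of_even he₁ he₂ hdle hx,
    fun x hx => ?_⟩
  rw [linearizeTails_deriv R hc'₁, linearizeTails_deriv R hc'₂]
  exact hdle _ (smoothClamp_nonneg hx)

theorem approximation_even_pair (φ1 φ2 : ℝ → ℝ) (h : AdmissibleEvenPair φ1 φ2) :
    ∃ (ψ1 ψ2 : ℕ → ℝ → ℝ) (M : ℕ → ℝ),
      (∀ r : ℕ, 0 < M r) ∧
      (∀ r : ℕ, AdmissibleEvenPair (ψ1 r) (ψ2 r)) ∧
      (∀ r : ℕ, ∃ A B : ℝ, ∀ x : ℝ, M r ≤ x → ψ1 r x = A * x + B) ∧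
      (∀ r : ℕ, ∃ A B : ℝ, ∀ x : ℝ, x ≤ -M r → ψ1 r x = A * x + B) ∧
      (∀ r : ℕ, ∃ A B : ℝ, ∀ x : ℝ, M r ≤ x → ψ2 r x = A * x + B) ∧
      (∀ r : ℕ, ∃ A B : ℝ, ∀ x : ℝ, x ≤ -M r → ψ2 r x = A * x + B) ∧
      (∀ r : ℕ, ∀ x : ℝ, ψ1 r x ≤ φ1 x) ∧
      (∀ r : ℕ, ∀ x : ℝ, ψ2 r x ≤ φ2 x) ∧
      (∀ x : ℝ, Tendsto (fun r => ψ1 r x) atTop (nhds (φ1 x))) ∧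
      (∀ x : ℝ, Tendsto (fun r => ψ2 r x) atTop (nhds (φ2 x))) := by
  have hψ := h.linearizeTails
  obtain ⟨⟨hd₁, hd'₁, -⟩, ⟨hd₂, hd'₂, -⟩, he₁, he₂, hc₁, hc₂, -⟩ := h
  exact ⟨fun r => linearizeTails r φ1, fun r => linearizeTails r φ2, fun r => r + 1,
    fun r => by positivity, fun r => hψ r,
    fun r => exists_linearizeTails_eq_affine_of_le r hd'₁.continuous,
    fun r => exists_linearizeTails_eq_affine_of_le_neg r hd'₁.continuous he₁,
    fun r => exists_linearizeTails_eq_affine_of_le r hd'₂.continuous,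
    fun r => exists_linearizeTails_eq_affine_of_le_neg r hd'₂.continuous he₂,
    fun r => linearizeTails_le r hd₁ hd'₁.continuous (hc₁.monotone_deriv hd₁),
    fun r => linearizeTails_le r hd₂ hd'₂.continuous (hc₂.monotone_deriv hd₂),
    tendsto_linearizeTails hd₁ hd'₁.continuous, tendsto_linearizeTails hd₂ hd'₂.continuous⟩
end

section
/- Let m > 0 and M ≥ 0, and let φ : ℝ → ℝ be continuous with φ(x) = A·x + B for all x ≥ M and φ(x) = A'·x + B' for all x ≤ −M, where A, A', B, B' are real constants. Then (E[exp(m·φ(x + √t·Z))])^{1/m} · exp(−(A·x + B + A²·m·t/2)) → 1 as x → +∞, uniformly over t ∈ [0,1], and (E[exp(m·φ(x + √t·Z))])^{1/m} · exp(−(A'·x + B' + (A')²·m·t/2)) → 1 as x → −∞, uniformly over t ∈ [0,1]. -/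
/-!
Write `φ = ℓ + ψ` with `ℓ y = A * y + B`. Completing the square in the Gaussian density (the
Cameron–Martin shift) turns the tilt `exp (m * ℓ)` into a shift of the mean by `m * A * t`, so the
normalised quantity equals `(E[exp (m * ψ (x + m * A * t + √t * Z))]) ^ (1 / m)`. As `ψ` vanishes on
`[M, ∞)` and grows at most linearly, the integrand differs from `1` only on `{Z < M - x}`, where it
is dominated by an integrable function of `Z` alone; hence the expectation tends to `1` uniformly
in `t`. The left tail is the right tail of `φ (-·)`, by the symmetry of `Z`.
-/

open MeasureTheory ProbabilityTheory Set Filter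
open scoped Topology NNReal

theorem tendstoUniformlyOn_const_iff_tendsto {ι α β : Type*} [UniformSpace β]
    {F : ι → α → β} {c : β} {p : Filter ι} {s : Set α} :
    TendstoUniformlyOn F (fun _ => c) p s ↔
      Tendsto (Function.uncurry F) (p ×ˢ 𝓟 s) (𝓝 c) := by
  rw [tendstoUniformlyOn_iff_tendsto, Uniform.tendsto_nhds_right]
  rfl

theorem gaussianPDFReal_mul_exp (μ : ℝ) (v : ℝ≥0) (b z : ℝ) :
    gaussianPDFReal μ v z * Real.exp (b * z) =
      Real.exp (μ * b + v * b ^ 2 / 2) * gaussianPDFReal μ v (z - v * b) := by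
  rcases eq_or_ne v 0 with rfl | hv
  · simp [gaussianPDFReal]
  simp only [gaussianPDFReal_def]
  rw [mul_left_comm, mul_assoc, ← Real.exp_add, ← Real.exp_add]
  congr 2
  field_simp
  ring

theorem integral_mul_exp_gaussianReal (μ : ℝ) (v : ℝ≥0) (g : ℝ → ℝ) (b : ℝ) :
    ∫ z, g z * Real.exp (b * z) ∂gaussianReal μ v =
      Real.exp (μ * b + v * b ^ 2 / 2) * ∫ z, g (z + v * b) ∂gaussianReal μ v := by
  rcases eq_or_ne v 0 with rfl | hv
  · simp [mul_comm]
  simp only [integral_gaussianReal_eq_integral_smul hv, smul_eq_mul]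
  calc ∫ z, gaussianPDFReal μ v z * (g z * Real.exp (b * z))
      = ∫ z, Real.exp (μ * b + v * b ^ 2 / 2) * (gaussianPDFReal μ v (z - v * b) * g z) := by
        congr 1 with z
        rw [mul_left_comm, gaussianPDFReal_mul_exp]
        ring
    _ = Real.exp (μ * b + v * b ^ 2 / 2) * ∫ z, gaussianPDFReal μ v z * g (z + v * b) := by
        rw [integral_const_mul, ← integral_add_right_eq_self _ (v * b)]
        simp only [add_sub_cancel_right]

theorem integral_comp_neg_gaussianReal {E : Type*} [NormedAddCommGroup E] [NormedSpace ℝ E]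
    (v : ℝ≥0) (g : ℝ → E) :
    ∫ z, g (-z) ∂gaussianReal 0 v = ∫ z, g z ∂gaussianReal 0 v := by
  conv_rhs => rw [← neg_zero, ← gaussianReal_map_neg]
  exact ((Homeomorph.neg ℝ).measurableEmbedding.integral_map g).symm

theorem exists_abs_le_of_affine_tails {φ : ℝ → ℝ} (hφ : Continuous φ) {M A B A' B' : ℝ}
    (hright : ∀ x, M ≤ x → φ x = A * x + B)
    (hleft : ∀ x, x ≤ -M → φ x = A' * x + B') :
    ∃ c k, 0 ≤ k ∧ ∀ x, |φ x| ≤ c + k * |x| := by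
  obtain ⟨C, hC⟩ :=
    (isCompact_Icc (a := -M) (b := M)).exists_bound_of_continuousOn hφ.continuousOn
  have haffine : ∀ a b x : ℝ, |a * x + b| ≤ |b| + |a| * |x| := fun a b x => by
    simpa [abs_mul, add_comm] using abs_add_le (a * x) b
  refine ⟨max C (max |B| |B'|), max |A| |A'|, by positivity, fun x => ?_⟩
  rcases le_or_gt M x with hx | hx
  · rw [hright x hx]
    refine (haffine A B x).trans (add_le_add (by simp) ?_)
    exact mul_le_mul_of_nonneg_right (le_max_left _ _) (abs_nonneg x)
  rcases le_or_gt x (-M) with hx' | hx'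
  · rw [hleft x hx']
    refine (haffine A' B' x).trans (add_le_add (by simp) ?_)
    exact mul_le_mul_of_nonneg_right (le_max_right _ _) (abs_nonneg x)
  · have hbounded := hC x ⟨hx'.le, hx.le⟩
    rw [Real.norm_eq_abs] at hbounded
    have hk : 0 ≤ max |A| |A'| * |x| := by positivity
    linarith [le_max_left C (max |B| |B'|)]

theorem integrable_exp_add_mul_abs_gaussianReal {μ : ℝ} {v : ℝ≥0} (a k : ℝ) :
    Integrable (fun z => Real.exp (a + k * |z|)) (gaussianReal μ v) := by
  have := (integrable_exp_mul_abs (integrable_exp_mul_gaussianReal (μ := μ) (v := v) k)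
    (integrable_exp_mul_gaussianReal (-k))).const_mul (Real.exp a)
  simpa only [← Real.exp_add] using this

section VanishingTail

variable {f : ℝ → ℝ} {M c k : ℝ}

theorem abs_exp_comp_sub_one_le_indicator (hM : 0 ≤ M) (hf0 : ∀ w, M ≤ w → f w = 0)
    (hk : 0 ≤ k) (hfle : ∀ w, f w ≤ c + k * |w|) {y s : ℝ} (hy : M ≤ y)
    (hs : s ∈ Icc (0 : ℝ) 1) (z : ℝ) :
    |Real.exp (f (y + s * z)) - 1| ≤
      (Iio (M - y)).indicator (fun z => Real.exp (c + k * M + k * |z|) + 1) z := by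
  by_cases hw : M ≤ y + s * z
  · rw [hf0 _ hw, Real.exp_zero, sub_self, abs_zero]
    exact indicator_nonneg (fun _ _ => by positivity) z
  rw [not_le] at hw
  have hz : z < M - y := by
    by_contra! hz
    nlinarith [hs.1, hs.2]
  rw [indicator_of_mem (mem_Iio.2 hz)]
  have hsz : z ≤ s * z := by nlinarith [hs.2]
  have hw_abs : |y + s * z| ≤ M + |z| := by
    rw [abs_le]; constructor <;> linarith [neg_abs_le z, le_abs_self z]
  have hexp : Real.exp (f (y + s * z)) ≤ Real.exp (c + k * M + k * |z|) := by
    gcongr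
    nlinarith [hfle (y + s * z), mul_le_mul_of_nonneg_left hw_abs hk]
  rw [abs_le]; constructor <;> linarith [Real.exp_pos (f (y + s * z))]

theorem abs_integral_exp_comp_sub_one_le (hf : Measurable f) (hM : 0 ≤ M)
    (hf0 : ∀ w, M ≤ w → f w = 0) (hk : 0 ≤ k) (hfle : ∀ w, f w ≤ c + k * |w|) {y s : ℝ}
    (hy : M ≤ y) (hs : s ∈ Icc (0 : ℝ) 1) :
    |∫ z, Real.exp (f (y + s * z)) ∂gaussianReal 0 1 - 1| ≤
      ∫ z in Iio (M - y), Real.exp (c + k * M + k * |z|) + 1 ∂gaussianReal 0 1 := by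
  have hG : Integrable (fun z => Real.exp (c + k * M + k * |z|) + 1) (gaussianReal 0 1) :=
    integrable_add_const_iff.2 (integrable_exp_add_mul_abs_gaussianReal _ _)
  have hbound := abs_exp_comp_sub_one_le_indicator hM hf0 hk hfle hy hs
  have hint : Integrable (fun z => Real.exp (f (y + s * z)) - 1) (gaussianReal 0 1) :=
    (hG.indicator measurableSet_Iio).mono' (by fun_prop : Measurable _).aestronglyMeasurable
      (ae_of_all _ hbound)
  have hsub : ∫ z, Real.exp (f (y + s * z)) ∂gaussianReal 0 1 - 1 =
      ∫ z, (Real.exp (f (y + s * z)) - 1) ∂gaussianReal 0 1 := by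
    have hexp_int := integrable_add_const_iff (c := (1 : ℝ)) |>.2 hint
    simp only [sub_add_cancel] at hexp_int
    rw [integral_sub hexp_int (integrable_const 1), integral_const, probReal_univ, one_smul]
  rw [hsub, ← integral_indicator measurableSet_Iio]
  exact norm_integral_le_of_norm_le (hG.indicator measurableSet_Iio)
    (ae_of_all _ fun z => (Real.norm_eq_abs _).trans_le (hbound z))

theorem tendsto_integral_exp_comp_atTop (hf : Measurable f) (hM : 0 ≤ M)
    (hf0 : ∀ w, M ≤ w → f w = 0) (hk : 0 ≤ k) (hfle : ∀ w, f w ≤ c + k * |w|) :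
    Tendsto (fun q : ℝ × ℝ => ∫ z, Real.exp (f (q.1 + q.2 * z)) ∂gaussianReal 0 1)
      (atTop ×ˢ 𝓟 (Icc 0 1)) (𝓝 1) := by
  have hT : Tendsto (fun y => ∫ z in Iio (M - y), Real.exp (c + k * M + k * |z|) + 1
      ∂gaussianReal 0 1) atTop (𝓝 0) := by
    have hG := integrable_add_const_iff (c := (1 : ℝ)) |>.2
      (integrable_exp_add_mul_abs_gaussianReal (μ := 0) (v := 1) (c + k * M) k)
    have hempty : ⋂ y : ℝ, Iio (M - y) = ∅ :=
      eq_empty_of_forall_notMem fun z hz => by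
        simpa using mem_iInter.1 hz (M - z)
    have := tendsto_setIntegral_of_antitone (s := fun y => Iio (M - y))
      (fun _ => measurableSet_Iio) (fun a b hab => Iio_subset_Iio (by linarith))
      ⟨0, hG.integrableOn⟩
    rwa [hempty, Measure.restrict_empty, integral_zero_measure] at this
  rw [tendsto_iff_norm_sub_tendsto_zero]
  refine squeeze_zero_norm' ?_ (hT.comp tendsto_fst)
  filter_upwards [(eventually_ge_atTop M).prod_mk (mem_principal_self (Icc (0 : ℝ) 1))]
    with q ⟨hy, hs⟩
  rw [norm_norm, Real.norm_eq_abs]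
  exact abs_integral_exp_comp_sub_one_le hf hM hf0 hk hfle hy hs

end VanishingTail

theorem integral_exp_add_affine_gaussianReal (f : ℝ → ℝ) (a b x s : ℝ) :
    ∫ z, Real.exp (f (x + s * z) + (a * (x + s * z) + b)) ∂gaussianReal 0 1 =
      Real.exp (a * x + b + (a * s) ^ 2 / 2) *
        ∫ z, Real.exp (f (x + a * s ^ 2 + s * z)) ∂gaussianReal 0 1 := by
  have hsplit : ∀ z, Real.exp (f (x + s * z) + (a * (x + s * z) + b)) =
      Real.exp (a * x + b) * (Real.exp (f (x + s * z)) * Real.exp (a * s * z)) := fun z => by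
    rw [← Real.exp_add, ← Real.exp_add]
    ring_nf
  simp_rw [hsplit]
  rw [integral_const_mul, integral_mul_exp_gaussianReal, ← mul_assoc, ← Real.exp_add]
  simp only [NNReal.coe_one, zero_mul, zero_add, one_mul]
  congr 2 with z
  ring_nf

theorem rpow_integral_exp_mul_mul_exp_eq (φ : ℝ → ℝ) {m : ℝ} (hm : m ≠ 0) (A B x : ℝ) {t : ℝ}
    (ht : 0 ≤ t) :
    (∫ z, Real.exp (m * φ (x + Real.sqrt t * z)) ∂gaussianReal 0 1) ^ (1 / m) *
        Real.exp (-(A * x + B + A ^ 2 * m * t / 2)) =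
      (∫ z, Real.exp (m * (φ (x + m * A * t + Real.sqrt t * z) -
        (A * (x + m * A * t + Real.sqrt t * z) + B))) ∂gaussianReal 0 1) ^ (1 / m) := by
  set ψ : ℝ → ℝ := fun w => m * (φ w - (A * w + B)) with hψ
  have htilt := integral_exp_add_affine_gaussianReal ψ (m * A) (m * B) x (Real.sqrt t)
  rw [mul_pow, Real.sq_sqrt ht] at htilt
  have hsplit : ∫ z, Real.exp (m * φ (x + Real.sqrt t * z)) ∂gaussianReal 0 1 =
      Real.exp (m * A * x + m * B + (m * A) ^ 2 * t / 2) *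
        ∫ z, Real.exp (ψ (x + m * A * t + Real.sqrt t * z)) ∂gaussianReal 0 1 := by
    rw [← htilt, hψ]
    congr 1 with z
    ring_nf
  rw [hsplit, Real.mul_rpow (Real.exp_pos _).le (integral_nonneg fun _ => (Real.exp_pos _).le),
    ← Real.exp_mul, mul_right_comm, ← Real.exp_add]
  convert one_mul _
  rw [Real.exp_eq_one_iff]
  field_simp
  ring

theorem tendsto_rpow_integral_exp_mul_atTop {m M A B A' B' : ℝ} {φ : ℝ → ℝ} (hm : 0 < m)
    (hM : 0 ≤ M) (hφ : Continuous φ) (hright : ∀ x, M ≤ x → φ x = A * x + B)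
    (hleft : ∀ x, x ≤ -M → φ x = A' * x + B') :
    Tendsto (fun q : ℝ × ℝ =>
        (∫ z, Real.exp (m * φ (q.1 + Real.sqrt q.2 * z)) ∂gaussianReal 0 1) ^ (1 / m) *
          Real.exp (-(A * q.1 + B + A ^ 2 * m * q.2 / 2)))
      (atTop ×ˢ 𝓟 (Icc 0 1)) (𝓝 1) := by
  set f : ℝ → ℝ := fun w => m * (φ w - (A * w + B)) with hf
  obtain ⟨c, k, hk, hgrowth⟩ := exists_abs_le_of_affine_tails
    (φ := fun w => φ w - (A * w + B)) (M := M) (A := 0) (B := 0) (A' := A' - A)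
    (B' := B' - B) (hφ.sub (by fun_prop))
    (fun x hx => by simp [hright x hx]) (fun x hx => by simp [hleft x hx]; ring)
  have hfle : ∀ w, f w ≤ m * c + m * k * |w| := fun w => by
    nlinarith [(abs_le.1 (hgrowth w)).2]
  have hJ := tendsto_integral_exp_comp_atTop (f := f) (by fun_prop) hM
    (fun w hw => by simp [hf, hright w hw]) (by positivity) hfle
  have hshift : Tendsto (fun q : ℝ × ℝ => (q.1 + m * A * q.2, Real.sqrt q.2))
      (atTop ×ˢ 𝓟 (Icc 0 1)) (atTop ×ˢ 𝓟 (Icc 0 1)) := by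
    have ht : ∀ᶠ q : ℝ × ℝ in atTop ×ˢ 𝓟 (Icc 0 1), q.2 ∈ Icc 0 1 :=
      tendsto_snd (mem_principal_self _)
    refine (tendsto_atTop_add_right_of_le' _ (-(m * |A|)) tendsto_fst ?_).prodMk
      (tendsto_principal.2 ?_)
    · filter_upwards [ht] with q hq
      have hAt : -|A| ≤ A * q.2 := by nlinarith [neg_abs_le A, abs_nonneg A, hq.1, hq.2]
      nlinarith [mul_le_mul_of_nonneg_left hAt hm.le]
    · filter_upwards [ht] with q hq
      exact ⟨Real.sqrt_nonneg _, Real.sqrt_le_one.2 hq.2⟩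
  have hlim := (hJ.comp hshift).rpow_const (p := 1 / m) (Or.inr (by positivity))
  rw [Real.one_rpow] at hlim
  refine hlim.congr' ?_
  filter_upwards [tendsto_snd (mem_principal_self (Icc (0 : ℝ) 1))] with q hq
  exact (rpow_integral_exp_mul_mul_exp_eq φ hm.ne' A B q.1 hq.1).symm

theorem asymptotics_linear_tails (m : ℝ) (hm : 0 < m) (M : ℝ) (hM : 0 ≤ M)
    (φ : ℝ → ℝ) (hφ : Continuous φ) (A B A' B' : ℝ)
    (hright : ∀ x : ℝ, M ≤ x → φ x = A * x + B)
    (hleft : ∀ x : ℝ, x ≤ -M → φ x = A' * x + B') :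
    TendstoUniformlyOn
      (fun (x : ℝ) (t : ℝ) =>
        (∫ z, Real.exp (m * φ (x + Real.sqrt t * z)) ∂(gaussianReal 0 1)) ^ (1 / m) *
          Real.exp (-(A * x + B + A ^ 2 * m * t / 2)))
      (fun _ => 1) atTop (Set.Icc (0 : ℝ) 1) ∧
    TendstoUniformlyOn
      (fun (x : ℝ) (t : ℝ) =>
        (∫ z, Real.exp (m * φ (x + Real.sqrt t * z)) ∂(gaussianReal 0 1)) ^ (1 / m) *
          Real.exp (-(A' * x + B' + A' ^ 2 * m * t / 2)))
      (fun _ => 1) atBot (Set.Icc (0 : ℝ) 1) := by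
  refine ⟨tendstoUniformlyOn_const_iff_tendsto.2
    (tendsto_rpow_integral_exp_mul_atTop hm hM hφ hright hleft), ?_⟩
  have hreflected := tendsto_rpow_integral_exp_mul_atTop (φ := fun w => φ (-w)) (A := -A')
    (B := B') (A' := -A) (B' := B) hm hM (hφ.comp continuous_neg)
    (fun x hx => by rw [hleft _ (by linarith)]; ring)
    (fun x hx => by rw [hright _ (by linarith)]; ring)
  rw [tendstoUniformlyOn_const_iff_tendsto]
  refine (hreflected.comp (tendsto_neg_atBot_atTop.prodMap tendsto_id)).congr fun ⟨x, t⟩ => ?_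
  simp only [Function.comp_apply, Prod.map_fst, Prod.map_snd, id, Function.uncurry_apply_pair]
  rw [← integral_comp_neg_gaussianReal]
  ring_nf
end

section
/- Let φ : ℝ → ℝ be twice differentiable with bounded first and second derivatives and convex, and let m > 0. Then for every t ∈ [0,1], the function x ↦ F_{φ,m}(x,t) is convex on ℝ. -/
open MeasureTheory ProbabilityTheory Set

/-! For each `z`, `x ↦ m φ(x + √t z)` is convex, and `x ↦ log ∫ exp (F x z) dμ(z)` is convex for
any `F` convex in `x`: bound `F (a x + b y) z ≤ a F x z + b F y z` inside the exponential, then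
apply Hölder with exponents `1/a`, `1/b` to `exp (a F x) · exp (b F y)`. A bounded derivative
makes `φ` Lipschitz, so these exponential moments are finite under the Gaussian. -/

open Real

section LogIntegralExp

variable {α : Type*} [MeasurableSpace α] {μ : Measure α} {f g : α → ℝ} {a b : ℝ}

lemma memLp_exp_mul_of_integrable_exp (hf : Integrable (fun z => exp (f z)) μ) (ha : 0 < a) :
    MemLp (fun z => exp (a * f z)) (ENNReal.ofReal (1 / a)) μ := by
  have h0 : ENNReal.ofReal (1 / a) ≠ 0 := by positivity
  have htop : ENNReal.ofReal (1 / a) ≠ ⊤ := ENNReal.ofReal_ne_top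
  have hmeas : AEMeasurable f μ := aemeasurable_of_aemeasurable_exp hf.aemeasurable
  rw [← memLp_norm_rpow_iff (by fun_prop) h0 htop, ENNReal.toReal_ofReal (by positivity),
    ENNReal.div_self h0 htop, memLp_one_iff_integrable]
  refine hf.congr (ae_of_all _ fun z => ?_)
  dsimp only
  rw [norm_of_nonneg (exp_pos _).le, ← exp_mul]
  field_simp

/-- Hölder's inequality with the conjugate exponents `1/a` and `1/b`. -/
lemma integral_exp_add_le_rpow_mul_rpow (hf : Integrable (fun z => exp (f z)) μ)
    (hg : Integrable (fun z => exp (g z)) μ) (ha : 0 < a) (hb : 0 < b) (hab : a + b = 1) :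
    ∫ z, exp (a * f z + b * g z) ∂μ ≤ (∫ z, exp (f z) ∂μ) ^ a * (∫ z, exp (g z) ∂μ) ^ b := by
  have hpow : ∀ {c : ℝ} (u : ℝ), 0 < c → exp (c * u) ^ (1 / c) = exp u := fun u hc => by
    rw [← exp_mul]
    field_simp
  have holder := integral_mul_le_Lp_mul_Lq_of_nonneg (holderConjugate_one_div ha hb hab)
    (ae_of_all _ fun z => (exp_pos (a * f z)).le) (ae_of_all _ fun z => (exp_pos (b * g z)).le)
    (memLp_exp_mul_of_integrable_exp hf ha) (memLp_exp_mul_of_integrable_exp hg hb)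
  simpa only [← exp_add, hpow _ ha, hpow _ hb, one_div_one_div] using holder

lemma integrable_exp_add_of_integrable_exp (hf : Integrable (fun z => exp (f z)) μ)
    (hg : Integrable (fun z => exp (g z)) μ) (ha : 0 ≤ a) (hb : 0 ≤ b) (hab : a + b = 1) :
    Integrable (fun z => exp (a * f z + b * g z)) μ := by
  have hf_meas := aemeasurable_of_aemeasurable_exp hf.aemeasurable
  have hg_meas := aemeasurable_of_aemeasurable_exp hg.aemeasurable
  refine ((hf.const_mul a).add (hg.const_mul b)).mono' (by fun_prop) (ae_of_all _ fun z => ?_)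
  rw [norm_of_nonneg (exp_pos _).le]
  exact convexOn_exp.2 (mem_univ (f z)) (mem_univ (g z)) ha hb hab

lemma convexOn_log_integral_exp [NeZero μ] {E : Type*} [AddCommGroup E] [Module ℝ E] {s : Set E}
    {F : E → α → ℝ} (hs : Convex ℝ s) (hF : ∀ z, ConvexOn ℝ s (F · z))
    (hF_int : ∀ x ∈ s, Integrable (fun z => exp (F x z)) μ) :
    ConvexOn ℝ s (fun x => log (∫ z, exp (F x z) ∂μ)) := by
  refine convexOn_iff_forall_pos.mpr ⟨hs, fun x hx y hy a b ha hb hab => ?_⟩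
  have hxy : a • x + b • y ∈ s := hs hx hy ha.le hb.le hab
  have hmix := integrable_exp_add_of_integrable_exp (hF_int x hx) (hF_int y hy) ha.le hb.le hab
  have hx_pos := integral_exp_pos (hF_int x hx)
  have hy_pos := integral_exp_pos (hF_int y hy)
  calc log (∫ z, exp (F (a • x + b • y) z) ∂μ)
      ≤ log (∫ z, exp (a * F x z + b * F y z) ∂μ) :=
        log_le_log (integral_exp_pos (hF_int _ hxy)) <| integral_mono (hF_int _ hxy) hmix
          fun z => exp_le_exp.2 ((hF z).2 hx hy ha.le hb.le hab)
    _ ≤ log ((∫ z, exp (F x z) ∂μ) ^ a * (∫ z, exp (F y z) ∂μ) ^ b) :=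
        log_le_log (integral_exp_pos hmix)
          (integral_exp_add_le_rpow_mul_rpow (hF_int x hx) (hF_int y hy) ha hb hab)
    _ = a • log (∫ z, exp (F x z) ∂μ) + b • log (∫ z, exp (F y z) ∂μ) := by
        rw [log_mul (by positivity) (by positivity), log_rpow hx_pos, log_rpow hy_pos,
          smul_eq_mul, smul_eq_mul]

end LogIntegralExp

lemma integrable_exp_gaussianReal_of_lipschitzWith {g : ℝ → ℝ} {K : NNReal}
    (hg : LipschitzWith K g) (μ : ℝ) (v : NNReal) :
    Integrable (fun z => exp (g z)) (gaussianReal μ v) := by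
  have hdom := (integrable_exp_abs_mul_abs (X := id)
    (integrable_exp_mul_gaussianReal (μ := μ) (v := v) K)
    (integrable_exp_mul_gaussianReal (μ := μ) (v := v) (-K))).const_mul (exp (g 0))
  refine hdom.mono' hg.continuous.rexp.aestronglyMeasurable (ae_of_all _ fun z => ?_)
  have hlip : g z - g 0 ≤ K * |z| := by
    simpa [Real.dist_eq] using (le_abs_self _).trans (hg.dist_le_mul z 0)
  rw [norm_of_nonneg (exp_pos _).le, ← exp_add, NNReal.abs_eq]
  exact exp_le_exp.2 (by simp only [id]; linarith)

lemma TwiceDiffBounded.exists_lipschitzWith {φ : ℝ → ℝ} (hφ : TwiceDiffBounded φ) :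
    ∃ K, LipschitzWith K φ := by
  obtain ⟨hdiff, -, ⟨C, hC⟩, -⟩ := hφ
  refine ⟨C.toNNReal, lipschitzWith_of_nnnorm_deriv_le hdiff fun x => ?_⟩
  rw [← NNReal.coe_le_coe, coe_nnnorm, norm_eq_abs, coe_toNNReal']
  exact (hC x).trans (le_max_left _ _)

theorem parisiF_convex_in_x (φ : ℝ → ℝ) (hφ : TwiceDiffBounded φ)
    (hconv : ConvexOn ℝ Set.univ φ) (m : ℝ) (hm : 0 < m) :
    ∀ t ∈ Set.Icc (0 : ℝ) 1, ConvexOn ℝ Set.univ (fun x => parisiF φ m x t) := by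
  intro t _
  obtain ⟨K, hK⟩ := hφ.exists_lipschitzWith
  have hconvex_slice : ∀ z, ConvexOn ℝ univ (fun x => m * φ (x + √t * z)) := fun z => by
    simpa only [preimage_univ, smul_eq_mul, Function.comp_apply] using
      (hconv.translate_left (√t * z)).smul hm.le
  have hintegrable :
      ∀ x ∈ univ, Integrable (fun z => exp (m * φ (x + √t * z))) (gaussianReal 0 1) :=
    fun x _ => integrable_exp_gaussianReal_of_lipschitzWith ((lipschitzWith_smul m).comp
      (hK.comp ((isometry_add_left x).lipschitz.comp (lipschitzWith_smul √t)))) 0 1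
  exact (convexOn_log_integral_exp convex_univ hconvex_slice hintegrable).smul
    (one_div_nonneg.2 hm.le)
end

section
/- Let 0 < m1 ≤ m2 be reals, let α ∈ [0,1], and set n = α·m1 + (1−α)·m2. Let A1, A2 be reals such that either 0 ≤ A1 ≤ A2 or A2 ≤ A1 ≤ 0. Then n·(α·A1 + (1−α)·A2)² ≤ α·m1·A1² + (1−α)·m2·A2². -/
/-!
With `M = α A1 + (1 - α) A2` and `β = 1 - α`, the gap between the two sides factors as
`α β (A2 - A1) (m2 (A2 + M) - m1 (A1 + M))`. When `0 ≤ A1 ≤ A2` both factors are nonnegative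
because `0 ≤ m1 ≤ m2` and `0 ≤ A1 + M ≤ A2 + M`; the case `A2 ≤ A1 ≤ 0` follows by negating `A1, A2`.
-/

theorem weighted_sq_gap_eq {a b : ℝ} (hab : a + b = 1) (m1 m2 A1 A2 : ℝ) :
    a * m1 * A1 ^ 2 + b * m2 * A2 ^ 2 - (a * m1 + b * m2) * (a * A1 + b * A2) ^ 2
      = a * b * (A2 - A1)
        * (m2 * (A2 + (a * A1 + b * A2)) - m1 * (A1 + (a * A1 + b * A2))) := by
  obtain rfl : b = 1 - a := by linarith
  ring

theorem mul_weighted_mean_sq_le_of_nonneg {a b m1 m2 A1 A2 : ℝ} (ha : 0 ≤ a) (hb : 0 ≤ b)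
    (hab : a + b = 1) (hm1 : 0 ≤ m1) (hm12 : m1 ≤ m2) (hA1 : 0 ≤ A1) (hA12 : A1 ≤ A2) :
    (a * m1 + b * m2) * (a * A1 + b * A2) ^ 2 ≤ a * m1 * A1 ^ 2 + b * m2 * A2 ^ 2 := by
  rw [← sub_nonneg, weighted_sq_gap_eq hab]
  have hM : 0 ≤ a * A1 + b * A2 := by have := hA1.trans hA12; positivity
  have hfactor : m1 * (A1 + (a * A1 + b * A2)) ≤ m2 * (A2 + (a * A1 + b * A2)) :=
    mul_le_mul hm12 (by linarith) (by linarith) (by linarith)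
  exact mul_nonneg (mul_nonneg (mul_nonneg ha hb) (sub_nonneg.2 hA12)) (sub_nonneg.2 hfactor)

theorem quadratic_interpolation_inequality (m1 m2 α : ℝ) (hm1 : 0 < m1) (hm12 : m1 ≤ m2)
    (hα : α ∈ Set.Icc (0 : ℝ) 1) (A1 A2 : ℝ)
    (hA : (0 ≤ A1 ∧ A1 ≤ A2) ∨ (A2 ≤ A1 ∧ A1 ≤ 0)) :
    (α * m1 + (1 - α) * m2) * (α * A1 + (1 - α) * A2) ^ 2
      ≤ α * m1 * A1 ^ 2 + (1 - α) * m2 * A2 ^ 2 := by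
  obtain ⟨hα0, hα1⟩ := hα
  have nonneg_case {B1 B2 : ℝ} : 0 ≤ B1 → B1 ≤ B2 → (α * m1 + (1 - α) * m2) * (α * B1 + (1 - α) * B2) ^ 2
      ≤ α * m1 * B1 ^ 2 + (1 - α) * m2 * B2 ^ 2 :=
    mul_weighted_mean_sq_le_of_nonneg hα0 (sub_nonneg.2 hα1) (add_sub_cancel α 1) hm1.le hm12
  rcases hA with ⟨hA1, hA12⟩ | ⟨hA21, hA1⟩
  · exact nonneg_case hA1 hA12
  · have := nonneg_case (neg_nonneg.2 hA1) (neg_le_neg hA21)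
    simpa only [neg_sq, mul_neg, ← neg_add] using this
end
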